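/- arXiv:2510.14754 — 7 statements merged into one kernel-verified Lean document; each statement's English description precedes it below -/
import Mathlib

section
/- Let p be prime, H = ⟨a_1,...,a_n⟩ ≅ (Z/pZ)^n with a_{n+1} := (a_1⋯a_n)^{-1}, and let K ≤ H be the kernel of a surjective homomorphism θ : H → (Z/pZ)^2 with a_j ∉ K for all j = 1,...,n+1. Then exactly one of the following holds: (1) there are integers r_3, s_3, ..., r_n, s_n ∈ {0,...,p-1} with (r_j, s_j) ≠ (0,0) for all j and (1 + r_3 + ⋯ + r_n, 1 + s_3 + ⋯ + s_n) ≢ (0,0) mod p such that K = ⟨a_1^{r_3} a_2^{s_3} a_3^{-1}, ..., a_1^{r_n} a_2^{s_n} a_n^{-1}⟩; or (2) there is an integer 2 ≤ t ≤ n-1, integers l_2, ..., l_t ∈ {1,...,p-1}, and integers r_{t+2}, s_{t+2}, ..., r_n, s_n ∈ {0,...,p-1} with (r_j, s_j) ≠ (0,0) and (1 + l_2 + ⋯ + l_t + r_{t+2} + ⋯ + r_n, 1 + s_{t+2} + ⋯ + s_n) ≢ (0,0) mod p such that K = ⟨a_1^{l_2} a_2^{-1}, ..., a_1^{l_t} a_t^{-1},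 a_1^{r_{t+2}} a_{t+1}^{s_{t+2}} a_{t+2}^{-1}, ..., a_1^{r_n} a_{t+1}^{s_n} a_n^{-1}⟩. -/
/-!
Put `u = θ(a_1)` and let `a_{t+1}` be the first generator whose image is not a multiple of `u`;
it exists because `θ` maps onto a plane. Writing `θ(a_j) = r_j u + s_j θ(a_{t+1})` in the basis
`(u, θ(a_{t+1}))`, we get `s_j = 0` for `j ≤ t`. The relations `a_j = r_j a_1 + s_j a_{t+1}` lie in
`K` and, together with `a_1` and `a_{t+1}`, span `H`; as `θ` is injective on `⟨a_1, a_{t+1}⟩`,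
they span `K`. The side conditions on the coefficients are `a_j ∉ K`, the one on the sums being
`a_{n+1} ∉ K` for `a_{n+1} = (a_1 ⋯ a_n)⁻¹`. The case `t = 1` is (1) and `t ≥ 2` is (2). They are
exclusive: (2) puts `θ(a_2)` on the line through `u`, and then the relations of (1) would put
`θ(a_{t+1})` there too.
-/

open Submodule Finset

theorem Submodule.toAddSubgroup_span_zmod {M : Type*} [AddCommGroup M] (n : ℕ)
    [Module (ZMod n) M] (S : Set M) :
    (span (ZMod n) S).toAddSubgroup = AddSubgroup.closure S :=
  le_antisymm
    (fun x (hx : x ∈ span (ZMod n) S) =>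
      (span_le (p := AddSubgroup.toZModSubmodule n (AddSubgroup.closure S)).mpr
        AddSubgroup.subset_closure) hx)
    (AddSubgroup.closure_le _ |>.mpr subset_span)

theorem AddMonoidHom.ker_eq_closure_iff {M N : Type*} [AddCommGroup M] [AddCommGroup N]
    (n : ℕ) [Module (ZMod n) M] [Module (ZMod n) N] (θ : M →+ N) (S : Set M) :
    θ.ker = AddSubgroup.closure S ↔ LinearMap.ker (θ.toZModLinearMap n) = span (ZMod n) S := by
  rw [← toAddSubgroup_span_zmod n, ← toAddSubgroup_inj]
  rfl

theorem LinearMap.ker_eq_span_of_disjoint {R M N : Type*} [Ring R] [AddCommGroup M]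
    [AddCommGroup N] [Module R M] [Module R N] (f : M →ₗ[R] N) {S T : Set M}
    (hS : S ⊆ ker f) (hST : span R (S ∪ T) = ⊤) (hT : Disjoint (span R T) (ker f)) :
    ker f = span R S := by
  rw [span_union] at hST
  calc ker f = (span R S ⊔ span R T) ⊓ ker f := by rw [hST, top_inf_eq]
    _ = span R S := by rw [sup_inf_assoc_of_le _ (span_le.mpr hS), hT.eq_bot, sup_bot_eq]

theorem LinearMap.mem_span_singleton_of_smul_sub_mem_ker {R M N : Type*} [Ring R]
    [AddCommGroup M] [AddCommGroup N] [Module R M] [Module R N] (f : M →ₗ[R] N) {x y : M}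
    (c : R) (h : c • x - y ∈ ker f) : f y ∈ R ∙ f x :=
  mem_span_singleton.mpr ⟨c, by simpa [sub_eq_zero] using h⟩

theorem LinearMap.mem_span_singleton_of_smul_add_smul_sub_mem_ker {R M N : Type*} [Ring R]
    [AddCommGroup M] [AddCommGroup N] [Module R M] [Module R N] (f : M →ₗ[R] N) {x y z : M}
    (c d : R) (h : c • x + d • y - z ∈ ker f) (hy : f y ∈ R ∙ f x) : f z ∈ R ∙ f x := by
  rw [LinearMap.mem_ker, map_sub, sub_eq_zero] at h
  rw [← h, map_add, map_smul, map_smul]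
  exact add_mem (smul_mem _ c (mem_span_singleton_self _)) (smul_mem _ d hy)

theorem LinearIndependent.exists_coord_of_finrank_eq_two {K V : Type*} [Field K]
    [AddCommGroup V] [Module K V] (hV : Module.finrank K V = 2) {u w : V}
    (h : LinearIndependent K ![u, w]) :
    ∃ r s : V →ₗ[K] K, (∀ v, r v • u + s v • w = v) ∧ r u = 1 ∧ s u = 0 ∧ r w = 0 ∧ s w = 1 := by
  let b := basisOfLinearIndependentOfCardEqFinrank h (by simp [hV])
  have hb0 : b 0 = u := by simp [b]
  have hb1 : b 1 = w := by simp [b]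
  refine ⟨b.coord 0, b.coord 1, fun v => ?_, ?_⟩
  · rw [← hb0, ← hb1, Module.Basis.coord_apply, Module.Basis.coord_apply,
      ← Fin.sum_univ_two (fun i => b.repr v i • b i), b.sum_repr]
  · simp [← hb0, ← hb1]

theorem Fin.apply_eq_sum_ite_val_eq {M : Type*} [AddCommMonoid M] {n k : ℕ} (g : Fin n → M)
    (hk : k < n) : g ⟨k, hk⟩ = ∑ j : Fin n, if (j : ℕ) = k then g j else 0 := by
  rw [Fintype.sum_eq_single ⟨k, hk⟩ fun j hj => if_neg fun h => hj (Fin.ext h), if_pos rfl]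

theorem Fin.sum_castSucc_eq_split {M : Type*} [AddCommMonoid M] {n t : ℕ} (ht1 : 1 ≤ t)
    (htn : t < n) (g : Fin (n + 1) → M) :
    ∑ j : Fin n, g j.castSucc =
      g 0 + ∑ j ∈ univ.filter (fun j : Fin (n + 1) => 1 ≤ (j : ℕ) ∧ (j : ℕ) < t), g j
        + g ⟨t, by omega⟩
        + ∑ j ∈ univ.filter (fun j : Fin (n + 1) => t + 1 ≤ (j : ℕ) ∧ (j : ℕ) < n), g j := by
  have hlhs : ∑ j : Fin n, g j.castSucc = ∑ j : Fin (n + 1), if (j : ℕ) < n then g j else 0 := by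
    simp [Fin.sum_univ_castSucc]
  rw [hlhs, show (0 : Fin (n + 1)) = ⟨0, n.succ_pos⟩ from rfl,
    Fin.apply_eq_sum_ite_val_eq g, Fin.apply_eq_sum_ite_val_eq g, sum_filter,
    sum_filter, ← sum_add_distrib, ← sum_add_distrib, ← sum_add_distrib]
  refine sum_congr rfl fun j _ => ?_
  split_ifs <;> first | omega | simp

section NormalForm

variable {K V : Type*} [Field K] [AddCommGroup V] [Module K V] {n : ℕ}

/-- The generators of shape (2) of the classification, with `t = 1` allowed (then there are no
`l`-generators and it is shape (1)); indices are zero-based, so `a ⟨t, _⟩` is `a_{t+1}`. -/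
def kerGenerators (a : Fin (n + 1) → Fin n → K) (t : ℕ) (ht : t < n) (l r s : Fin (n + 1) → K) :
    Set (Fin n → K) :=
  {x | (∃ j : Fin (n + 1), 1 ≤ (j : ℕ) ∧ (j : ℕ) < t ∧ x = l j • a 0 - a j) ∨
    (∃ j : Fin (n + 1), t + 1 ≤ (j : ℕ) ∧ (j : ℕ) < n ∧
      x = r j • a 0 + s j • a ⟨t, by omega⟩ - a j)}

def IsKerNormalForm (f : (Fin n → K) →ₗ[K] V) (a : Fin (n + 1) → Fin n → K) (t : ℕ)
    (ht : t < n) : Prop :=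
  ∃ l r s : Fin (n + 1) → K,
    (∀ j : Fin (n + 1), 1 ≤ (j : ℕ) → (j : ℕ) < t → l j ≠ 0) ∧
    (∀ j : Fin (n + 1), t + 1 ≤ (j : ℕ) → (j : ℕ) < n → ¬(r j = 0 ∧ s j = 0)) ∧
    ¬(1 + (∑ j ∈ univ.filter (fun j : Fin (n + 1) => 1 ≤ (j : ℕ) ∧ (j : ℕ) < t), l j)
        + (∑ j ∈ univ.filter (fun j : Fin (n + 1) => t + 1 ≤ (j : ℕ) ∧ (j : ℕ) < n), r j) = 0 ∧
      1 + ∑ j ∈ univ.filter (fun j : Fin (n + 1) => t + 1 ≤ (j : ℕ) ∧ (j : ℕ) < n), s j = 0) ∧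
    LinearMap.ker f = span K (kerGenerators a t ht l r s)

variable {a : Fin (n + 1) → Fin n → K} (f : (Fin n → K) →ₗ[K] V)

theorem span_range_castSucc_eq_top (ha : ∀ j : Fin n, a j.castSucc = Pi.single j 1) :
    span K (Set.range (a ∘ Fin.castSucc)) = ⊤ := by
  rw [← (Pi.basisFun K (Fin n)).span_eq]
  congr 1
  ext
  simp [ha]

theorem exists_first_not_mem_span_singleton (ha : ∀ j : Fin n, a j.castSucc = Pi.single j 1)
    (hV : Module.finrank K V = 2) (hf : Function.Surjective f) :
    ∃ t, ∃ ht : t < n, 1 ≤ t ∧ f (a ⟨t, by omega⟩) ∉ K ∙ f (a 0) ∧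
      ∀ j : Fin (n + 1), (j : ℕ) < t → f (a j) ∈ K ∙ f (a 0) := by
  classical
  have hex : ∃ t, ∃ ht : t < n, f (a ⟨t, by omega⟩) ∉ K ∙ f (a 0) := by
    by_contra! hall
    have hrange : LinearMap.range f ≤ K ∙ f (a 0) := by
      rw [LinearMap.range_eq_map, ← span_range_castSucc_eq_top ha, map_span, span_le]
      rintro _ ⟨_, ⟨j, rfl⟩, rfl⟩
      exact hall j j.isLt
    rw [LinearMap.range_eq_top.mpr hf, top_le_iff] at hrange
    have := finrank_span_le_card (R := K) ({f (a 0)} : Set V)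
    rw [hrange, finrank_top, hV] at this
    simp at this
  obtain ⟨ht, hnot⟩ := Nat.find_spec hex
  refine ⟨Nat.find hex, ht, Nat.one_le_iff_ne_zero.mpr fun h0 => hnot ?_, hnot, fun j hj => ?_⟩
  · rw [show (⟨Nat.find hex, _⟩ : Fin (n + 1)) = 0 from Fin.ext h0]
    exact mem_span_singleton_self _
  · have := Nat.find_min hex hj
    simp only [not_exists, not_not] at this
    exact this (by omega)

theorem ker_eq_span_kerGenerators (ha : ∀ j : Fin n, a j.castSucc = Pi.single j 1) {t : ℕ}
    (htn : t < n) (l r s : Fin (n + 1) → K)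
    (hl : ∀ j : Fin (n + 1), 1 ≤ (j : ℕ) → (j : ℕ) < t → f (a j) = l j • f (a 0))
    (hr : ∀ j : Fin (n + 1), t + 1 ≤ (j : ℕ) → (j : ℕ) < n →
      f (a j) = r j • f (a 0) + s j • f (a ⟨t, by omega⟩))
    (hind : LinearIndependent K ![f (a 0), f (a ⟨t, by omega⟩)]) :
    LinearMap.ker f = span K (kerGenerators a t htn l r s) := by
  set T := Set.range ![a 0, a ⟨t, by omega⟩]
  refine f.ker_eq_span_of_disjoint (T := T) ?_ ?_ ?_
  · rintro x (⟨j, h1, h2, rfl⟩ | ⟨j, h1, h2, rfl⟩)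
    · simp [hl j h1 h2]
    · simp [hr j h1 h2]
  · rw [eq_top_iff, ← span_range_castSucc_eq_top ha, span_le]
    rintro _ ⟨j, rfl⟩
    have h0 : a 0 ∈ span K (kerGenerators a t htn l r s ∪ T) := subset_span (Or.inr ⟨0, rfl⟩)
    have ht : a ⟨t, by omega⟩ ∈ span K (kerGenerators a t htn l r s ∪ T) :=
      subset_span (Or.inr ⟨1, rfl⟩)
    obtain h | h | h | h : (j : ℕ) = 0 ∨ (1 ≤ (j : ℕ) ∧ (j : ℕ) < t) ∨ (j : ℕ) = t ∨
        (t + 1 ≤ (j : ℕ) ∧ (j : ℕ) < n) := by omega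
    · rwa [Function.comp_apply, show j.castSucc = 0 from Fin.ext h]
    · have hg := subset_span (R := K) (s := kerGenerators a t htn l r s ∪ T)
        (Or.inl (Or.inl ⟨j.castSucc, h.1, h.2, rfl⟩))
      simpa using sub_mem (smul_mem _ (l j.castSucc) h0) hg
    · rwa [Function.comp_apply, show j.castSucc = ⟨t, by omega⟩ from Fin.ext h]
    · have hg := subset_span (R := K) (s := kerGenerators a t htn l r s ∪ T)
        (Or.inl (Or.inr ⟨j.castSucc, h.1, h.2, rfl⟩))
      simpa using sub_mem (add_mem (smul_mem _ (r j.castSucc) h0) (smul_mem _ (s j.castSucc) ht)) hg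
  · have hcomp : f ∘ ![a 0, a ⟨t, by omega⟩] = ![f (a 0), f (a ⟨t, by omega⟩)] := by
      ext i
      fin_cases i <;> rfl
    exact Submodule.range_ker_disjoint (hcomp ▸ hind)

theorem isKerNormalForm_of_not_mem_span (ha : ∀ j : Fin n, a j.castSucc = Pi.single j 1)
    (hlast : a (Fin.last n) = -∑ j : Fin n, Pi.single j 1) (hV : Module.finrank K V = 2)
    (hne : ∀ j, f (a j) ≠ 0) {t : ℕ} (ht1 : 1 ≤ t) (htn : t < n)
    (hw : f (a ⟨t, by omega⟩) ∉ K ∙ f (a 0))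
    (hdep : ∀ j : Fin (n + 1), (j : ℕ) < t → f (a j) ∈ K ∙ f (a 0)) :
    IsKerNormalForm f a t htn := by
  have hli : LinearIndependent K ![f (a 0), f (a ⟨t, by omega⟩)] :=
    (LinearIndependent.pair_iff' (hne 0)).mpr
      fun c hc => hw (hc ▸ smul_mem _ c (mem_span_singleton_self _))
  obtain ⟨r, s, hrs, hr0, hs0, hrt, hst⟩ := hli.exists_coord_of_finrank_eq_two hV
  have hs : ∀ j : Fin (n + 1), (j : ℕ) < t → s (f (a j)) = 0 := fun j hj => by
    obtain ⟨c, hc⟩ := mem_span_singleton.mp (hdep j hj)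
    rw [← hc, map_smul, hs0, smul_zero]
  have hne' : ∀ j, ¬(r (f (a j)) = 0 ∧ s (f (a j)) = 0) := fun j ⟨hr, hs⟩ =>
    hne j (by rw [← hrs (f (a j)), hr, hs, zero_smul, zero_smul, add_zero])
  refine ⟨fun j => r (f (a j)), fun j => r (f (a j)), fun j => s (f (a j)),
    fun j _ hjt hr => hne' j ⟨hr, hs j hjt⟩, fun j _ _ => hne' j, ?_,
    ker_eq_span_kerGenerators f ha htn _ _ _
      (fun j _ hjt => (hrs _).symm.trans (by rw [hs j hjt, zero_smul, add_zero]))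
      (fun j _ _ => (hrs _).symm) hli⟩
  rintro ⟨hsum0, hsum1⟩
  have hr_sum : ∑ j : Fin n, r (f (a j.castSucc)) = 0 := by
    rw [Fin.sum_castSucc_eq_split ht1 htn (fun j => r (f (a j))), hr0, hrt]
    linear_combination hsum0
  have hs_sum : ∑ j : Fin n, s (f (a j.castSucc)) = 0 := by
    rw [Fin.sum_castSucc_eq_split ht1 htn (fun j => s (f (a j))), hs0, hst,
      sum_eq_zero fun j hj => hs j (mem_filter.mp hj).2.2]
    linear_combination hsum1
  refine hne (Fin.last n) ?_
  calc f (a (Fin.last n)) = -∑ j : Fin n, f (a j.castSucc) := by simp [hlast, ha]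
    _ = -(r (∑ j : Fin n, f (a j.castSucc)) • f (a 0) +
          s (∑ j : Fin n, f (a j.castSucc)) • f (a ⟨t, by omega⟩)) := by rw [hrs]
    _ = 0 := by rw [map_sum, map_sum, hr_sum, hs_sum, zero_smul, zero_smul, add_zero, neg_zero]

theorem IsKerNormalForm.exists_of_one (hn : 1 < n) (h : IsKerNormalForm f a 1 hn) :
    ∃ r s : Fin (n + 1) → K,
      (∀ j : Fin (n + 1), 2 ≤ (j : ℕ) → (j : ℕ) < n → ¬(r j = 0 ∧ s j = 0)) ∧
      ¬(1 + ∑ j ∈ univ.filter (fun j : Fin (n + 1) => 2 ≤ (j : ℕ) ∧ (j : ℕ) < n), r j = 0 ∧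
        1 + ∑ j ∈ univ.filter (fun j : Fin (n + 1) => 2 ≤ (j : ℕ) ∧ (j : ℕ) < n), s j = 0) ∧
      LinearMap.ker f = span K
        {x | ∃ j : Fin (n + 1), 2 ≤ (j : ℕ) ∧ (j : ℕ) < n ∧ x = r j • a 0 + s j • a 1 - a j} := by
  obtain ⟨l, r, s, -, hrs, hsum, hK⟩ := h
  have hempty : univ.filter (fun j : Fin (n + 1) => 1 ≤ (j : ℕ) ∧ (j : ℕ) < 1) = ∅ :=
    filter_false_of_mem fun j _ => by omega
  have hone : (⟨1, by omega⟩ : Fin (n + 1)) = 1 := Fin.ext (Nat.mod_eq_of_lt (by omega)).symm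
  rw [hempty, sum_empty, add_zero] at hsum
  refine ⟨r, s, hrs, hsum, ?_⟩
  rw [hK, kerGenerators, hone]
  congr 1
  exact Set.ext fun x => ⟨fun hx => hx.resolve_left (by rintro ⟨j, h1, h2, -⟩; omega), Or.inr⟩

end NormalForm

/-- Classification of the members of `F(p,n)` (for `p` prime, `n ≥ 3`):
if `K = ker θ` for a surjection `θ : H → (ℤ/pℤ)²` with `a_j ∉ K` for all
`j = 1,…,n+1` (here `H = Fin n → ZMod p` with standard basis `a_1,…,a_n`
and `a_{n+1} = -(a_1+⋯+a_n)`), then exactly one of the following holds: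
(1) `K = ⟨a_1^{r_3} a_2^{s_3} a_3^{-1}, …, a_1^{r_n} a_2^{s_n} a_n^{-1}⟩`
with `(r_j,s_j) ≠ (0,0)` for each `j` and
`(1+r_3+⋯+r_n, 1+s_3+⋯+s_n) ≢ (0,0) (mod p)`; or
(2) there is `2 ≤ t ≤ n-1` with
`K = ⟨a_1^{l_2} a_2^{-1}, …, a_1^{l_t} a_t^{-1},
a_1^{r_{t+2}} a_{t+1}^{s_{t+2}} a_{t+2}^{-1}, …, a_1^{r_n} a_{t+1}^{s_n} a_n^{-1}⟩`
with `l_j ≠ 0`, `(r_j,s_j) ≠ (0,0)` and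
`(1+l_2+⋯+l_t+r_{t+2}+⋯+r_n, 1+s_{t+2}+⋯+s_n) ≢ (0,0) (mod p)`.
Indices here are zero-based: `a_j` of the paper is `a ⟨j-1⟩`. -/
theorem stmt4 (p n : ℕ) [Fact p.Prime]
    (a : Fin (n + 1) → (Fin n → ZMod p))
    (ha : ∀ j : Fin n, a j.castSucc = Pi.single j 1)
    (hlast : a (Fin.last n) = -∑ j : Fin n, Pi.single j 1)
    (θ : (Fin n → ZMod p) →+ (Fin 2 → ZMod p))
    (hsurj : Function.Surjective θ)
    (hnotin : ∀ j, a j ∉ θ.ker) :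
    Xor'
      (∃ r s : Fin (n + 1) → ZMod p,
        (∀ j : Fin (n + 1), 2 ≤ (j : ℕ) → (j : ℕ) < n → ¬(r j = 0 ∧ s j = 0)) ∧
        ¬(1 + ∑ j ∈ Finset.univ.filter (fun j : Fin (n + 1) => 2 ≤ (j : ℕ) ∧ (j : ℕ) < n), r j = 0 ∧
          1 + ∑ j ∈ Finset.univ.filter (fun j : Fin (n + 1) => 2 ≤ (j : ℕ) ∧ (j : ℕ) < n), s j = 0) ∧
        θ.ker = AddSubgroup.closure
          {x | ∃ j : Fin (n + 1), 2 ≤ (j : ℕ) ∧ (j : ℕ) < n ∧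
            x = r j • a 0 + s j • a 1 - a j})
      (∃ t : ℕ, ∃ ht2 : 2 ≤ t, ∃ htn : t ≤ n - 1,
        ∃ l r s : Fin (n + 1) → ZMod p,
        (∀ j : Fin (n + 1), 1 ≤ (j : ℕ) → (j : ℕ) < t → l j ≠ 0) ∧
        (∀ j : Fin (n + 1), t + 1 ≤ (j : ℕ) → (j : ℕ) < n → ¬(r j = 0 ∧ s j = 0)) ∧
        ¬(1 + (∑ j ∈ Finset.univ.filter (fun j : Fin (n + 1) => 1 ≤ (j : ℕ) ∧ (j : ℕ) < t), l j)
            + (∑ j ∈ Finset.univ.filter (fun j : Fin (n + 1) => t + 1 ≤ (j : ℕ) ∧ (j : ℕ) < n), r j) = 0 ∧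
          1 + ∑ j ∈ Finset.univ.filter (fun j : Fin (n + 1) => t + 1 ≤ (j : ℕ) ∧ (j : ℕ) < n), s j = 0) ∧
        θ.ker = AddSubgroup.closure
          {x | (∃ j : Fin (n + 1), 1 ≤ (j : ℕ) ∧ (j : ℕ) < t ∧ x = l j • a 0 - a j) ∨
               (∃ j : Fin (n + 1), t + 1 ≤ (j : ℕ) ∧ (j : ℕ) < n ∧
                 x = r j • a 0 + s j • a ⟨t, by omega⟩ - a j)}) := by
  set θL := θ.toZModLinearMap p
  have hV : Module.finrank (ZMod p) (Fin 2 → ZMod p) = 2 := Module.finrank_fin_fun _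
  obtain ⟨t, htn, ht1, hw, hdep⟩ := exists_first_not_mem_span_singleton θL ha hV hsurj
  have hnf := isKerNormalForm_of_not_mem_span θL ha hlast hV hnotin ht1 htn hw hdep
  rcases ht1.eq_or_lt with rfl | ht2
  · obtain ⟨r, s, hrs, hsum, hK⟩ := hnf.exists_of_one
    refine Or.inl ⟨⟨r, s, hrs, hsum, (θ.ker_eq_closure_iff p _).mpr hK⟩, ?_⟩
    rintro ⟨t', ht2', htn', l, r', s', -, -, -, hK'⟩
    refine hw (θL.mem_span_singleton_of_smul_sub_mem_ker (l ⟨1, by omega⟩) ?_)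
    exact hK'.ge <| AddSubgroup.subset_closure (Or.inl ⟨⟨1, by omega⟩, le_rfl, ht2', rfl⟩)
  · obtain ⟨l, r, s, hl, hrs, hsum, hK⟩ := hnf
    refine Or.inr ⟨⟨t, ht2, by omega, l, r, s, hl, hrs, hsum,
      (θ.ker_eq_closure_iff p _).mpr hK⟩, ?_⟩
    rintro ⟨r', s', -, -, hK'⟩
    refine hw (θL.mem_span_singleton_of_smul_add_smul_sub_mem_ker (r' ⟨t, by omega⟩)
      (s' ⟨t, by omega⟩) ?_ (hdep 1 ?_))
    · exact hK'.ge <| AddSubgroup.subset_closure ⟨⟨t, by omega⟩, ht2, htn, rfl⟩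
    · rw [Fin.val_one', Nat.mod_eq_of_lt (by omega)]
      exact ht2
end

section
/- Let p ≥ 3 be prime and H = ⟨a_1, a_2, a_3⟩ ≅ (Z/pZ)^3 with a_4 := (a_1 a_2 a_3)^{-1}. The set F(p,3) of subgroups K ≤ H with H/K ≅ (Z/pZ)^2 and a_j ∉ K for j = 1,2,3,4 consists exactly of: (i) the groups K(r,s) = ⟨a_1^r a_2^s a_3^{-1}⟩ for r, s ∈ {0,...,p-1} with (r,s) ∉ {(0,0), (p-1,p-1)}, and (ii) the groups K(l) = ⟨a_1^l a_2^{-1}⟩ for l ∈ {1,...,p-1}. In particular, F(p,3) has exactly p^2 + p - 3 elements. -/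
/-!
A subgroup `K` of `H = (ℤ/pℤ)³` with `H/K ≅ (ℤ/pℤ)²` has order `p`, so it is the line
`𝔽_p v` spanned by any of its nonzero elements. Scaling `v` so that its last nonzero coordinate
is `-1` gives each line a unique generator `(r, s, -1)`, `(l, -1, 0)` or `(-1, 0, 0)`: the
`p² + p + 1` points of the projective plane. The elements `a_1, a_2, a_3, a_4` are the points
`(-1, 0, 0)`, `(l = 0)`, `(r, s) = (0, 0)` and `(r, s) = (-1, -1)`, and removing them leaves
`p² + p - 3` lines.
-/

open Submodule Module

theorem AddSubgroup.exists_ne_zero_eq_closure_singleton_of_card_eq_prime {G : Type*}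
    [AddGroup G] {p : ℕ} [hp : Fact p.Prime] (K : AddSubgroup G) (hK : Nat.card K = p) :
    ∃ v ≠ 0, K = closure {v} := by
  have : Finite K := Nat.finite_of_card_ne_zero (hK ▸ hp.out.ne_zero)
  have : Nontrivial K := Finite.one_lt_card_iff_nontrivial.mp (hK ▸ hp.out.one_lt)
  obtain ⟨x, hx⟩ := exists_ne (0 : K)
  refine ⟨x, by simpa using hx, ?_⟩
  simpa [← zmultiples_eq_closure, AddMonoidHom.map_zmultiples, ← AddMonoidHom.range_eq_map] using
    congrArg (map K.subtype) (zmultiples_eq_top_of_prime_card hK hx).symm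

namespace AddSubgroup

variable {n : ℕ} {M : Type*} [AddCommGroup M] [Module (ZMod n) M]

theorem toZModSubmodule_closure (s : Set M) : toZModSubmodule n (closure s) = span (ZMod n) s :=
  le_antisymm ((toZModSubmodule n).le_symm_apply.mp (closure_le _ |>.mpr subset_span))
    (span_le.mpr subset_closure)

theorem closure_eq_toAddSubgroup_span (s : Set M) :
    closure s = (span (ZMod n) s).toAddSubgroup := by
  rw [← toZModSubmodule_closure]; rfl

end AddSubgroup

section QuotientByLine

variable {p : ℕ} [hp : Fact p.Prime] {V W : Type*} [AddCommGroup V] [Module (ZMod p) V]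
  [Finite V] [AddCommGroup W] [Module (ZMod p) W] [Finite W]

theorem nonempty_quotient_addEquiv_iff (K : AddSubgroup V)
    (hVW : finrank (ZMod p) V = finrank (ZMod p) W + 1) :
    Nonempty (V ⧸ K ≃+ W) ↔ ∃ v ≠ 0, K = AddSubgroup.closure {v} := by
  constructor
  · rintro ⟨e⟩
    refine K.exists_ne_zero_eq_closure_singleton_of_card_eq_prime (p := p)
      (Nat.eq_of_mul_eq_mul_left (pow_pos hp.out.pos (finrank (ZMod p) W)) ?_)
    calc p ^ finrank (ZMod p) W * Nat.card K = Nat.card (V ⧸ K) * Nat.card K := by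
          rw [Nat.card_congr e.toEquiv, natCard_eq_pow_finrank (K := ZMod p) (V := W),
            Nat.card_zmod]
      _ = Nat.card V := K.card_eq_card_quotient_mul_card_addSubgroup.symm
      _ = p ^ finrank (ZMod p) W * p := by
          rw [natCard_eq_pow_finrank (K := ZMod p), Nat.card_zmod, hVW, pow_succ]
  · rintro ⟨v, hv, rfl⟩
    have := (span (ZMod p) {v}).finrank_quotient_add_finrank
    rw [finrank_span_singleton hv, hVW] at this
    rw [AddSubgroup.closure_eq_toAddSubgroup_span (n := p)]
    exact ⟨(LinearEquiv.ofFinrankEq (R := ZMod p) (V ⧸ span (ZMod p) {v}) W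
      (by omega)).toAddEquiv⟩

end QuotientByLine

section LinesInThreeSpace

variable {F : Type*} [Field F]

theorem mem_span_singleton_iff_eq_smul_of_apply_ne_zero {ι : Type*} {w x : ι → F} {i : ι}
    (hw : w i ≠ 0) : x ∈ span F {w} ↔ x = (x i / w i) • w := by
  refine ⟨fun h ↦ ?_, fun h ↦ h ▸ smul_mem _ _ (mem_span_singleton_self w)⟩
  obtain ⟨c, rfl⟩ := mem_span_singleton.mp h
  simp [hw]

theorem eq_of_span_singleton_eq_of_apply_eq {ι : Type*} {w w' : ι → F} {i : ι}
    (hw : w i ≠ 0) (hi : w' i = w i) (h : span F {w'} = span F {w}) : w' = w := by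
  have := (mem_span_singleton_iff_eq_smul_of_apply_ne_zero hw).mp (h ▸ mem_span_singleton_self w')
  rwa [hi, div_self hw, one_smul] at this

def standardFrame (F : Type*) [Field F] : Fin 4 → Fin 3 → F :=
  ![![1, 0, 0], ![0, 1, 0], ![0, 0, 1], ![-1, -1, -1]]

theorem eq_standardFrame (a : Fin 4 → Fin 3 → F)
    (ha : ∀ j : Fin 3, a j.castSucc = Pi.single j 1) (hlast : a 3 = -(a 0 + a 1 + a 2)) :
    a = standardFrame F := by
  have h (j : Fin 3) : a j.castSucc = standardFrame F j.castSucc := by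
    rw [ha]; ext i; fin_cases j <;> fin_cases i <;> simp [standardFrame]
  funext j
  induction j using Fin.lastCases with
  | last =>
    rw [show Fin.last 3 = 3 from rfl, hlast, show a 0 = _ from h 0, show a 1 = _ from h 1,
      show a 2 = _ from h 2]
    ext i; fin_cases i <;> simp [standardFrame]
  | cast j => exact h j

theorem forall_standardFrame_notMem_span_first (r s : F) :
    (∀ j, standardFrame F j ∉ span F {![r, s, -1]}) ↔
      ¬(r = 0 ∧ s = 0) ∧ ¬(r = -1 ∧ s = -1) := by
  simp_rw [mem_span_singleton_iff_eq_smul_of_apply_ne_zero (w := ![r, s, -1]) (i := 2) (by simp)]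
  simp [Fin.forall_fin_succ, standardFrame, @eq_comm _ (-1 : F)]

theorem forall_standardFrame_notMem_span_second (l : F) :
    (∀ j, standardFrame F j ∉ span F {![l, -1, 0]}) ↔ l ≠ 0 := by
  simp_rw [mem_span_singleton_iff_eq_smul_of_apply_ne_zero (w := ![l, -1, 0]) (i := 1) (by simp)]
  simp [Fin.forall_fin_succ, standardFrame]

theorem standardFrame_zero_mem_span : standardFrame F 0 ∈ span F {![-1, 0, 0]} := by
  rw [mem_span_singleton_iff_eq_smul_of_apply_ne_zero (i := 0) (by simp)]
  simp [standardFrame]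

theorem span_singleton_normal_form {v : Fin 3 → F} (hv : v ≠ 0) :
    (∃ r s, span F {v} = span F {![r, s, -1]}) ∨ (∃ l, span F {v} = span F {![l, -1, 0]}) ∨
      span F {v} = span F {![-1, 0, 0]} := by
  have rescale (i : Fin 3) (hi : v i ≠ 0) : span F {v} = span F {(-(v i)⁻¹) • v} :=
    (span_singleton_smul_eq (IsUnit.mk0 _ (by simpa)) v).symm
  by_cases h2 : v 2 = 0
  · by_cases h1 : v 1 = 0
    · have h0 : v 0 ≠ 0 := fun h0 ↦ hv (funext fun i ↦ by fin_cases i <;> assumption)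
      refine .inr (.inr ((rescale 0 h0).trans ?_))
      congr; ext i; fin_cases i <;> simp [h0, h1, h2]
    · refine .inr (.inl ⟨-(v 1)⁻¹ * v 0, (rescale 1 h1).trans ?_⟩)
      congr; ext i; fin_cases i <;> simp [h1, h2]
  · refine .inl ⟨-(v 2)⁻¹ * v 0, -(v 2)⁻¹ * v 1, (rescale 2 h2).trans ?_⟩
    congr; ext i; fin_cases i <;> simp [h2]

theorem forall_standardFrame_notMem_span_iff {v : Fin 3 → F} (hv : v ≠ 0) :
    (∀ j, standardFrame F j ∉ span F {v}) ↔
      (∃ r s, ¬(r = 0 ∧ s = 0) ∧ ¬(r = -1 ∧ s = -1) ∧ span F {v} = span F {![r, s, -1]}) ∨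
        (∃ l, l ≠ 0 ∧ span F {v} = span F {![l, -1, 0]}) := by
  constructor
  · intro hF
    rcases span_singleton_normal_form hv with ⟨r, s, h⟩ | ⟨l, h⟩ | h <;> rw [h] at hF
    · obtain ⟨h0, h1⟩ := (forall_standardFrame_notMem_span_first r s).mp hF
      exact .inl ⟨r, s, h0, h1, h⟩
    · exact .inr ⟨l, (forall_standardFrame_notMem_span_second l).mp hF, h⟩
    · exact absurd standardFrame_zero_mem_span (hF 0)
  · rintro (⟨r, s, h0, h1, h⟩ | ⟨l, hl, h⟩) <;> rw [h]
    · exact (forall_standardFrame_notMem_span_first r s).mpr ⟨h0, h1⟩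
    · exact (forall_standardFrame_notMem_span_second l).mpr hl

theorem span_singleton_injective_first :
    Function.Injective fun x : F × F ↦ span F {![x.1, x.2, -1]} := by
  rintro ⟨r, s⟩ ⟨r', s'⟩ h
  simpa using eq_of_span_singleton_eq_of_apply_eq (w := ![r', s', -1]) (w' := ![r, s, -1])
    (i := 2) (by simp) (by simp) h

theorem span_singleton_injective_second : Function.Injective fun l : F ↦ span F {![l, -1, 0]} :=
  fun l l' h ↦ by
    simpa using eq_of_span_singleton_eq_of_apply_eq (w := ![l', -1, 0]) (w' := ![l, -1, 0])
      (i := 1) (by simp) (by simp) h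

theorem span_singleton_first_ne_second (r s l : F) :
    span F {![r, s, -1]} ≠ span F {![l, -1, 0]} := by
  intro h
  have : ![l, -1, 0] ∈ span F {![r, s, -1]} := h ▸ mem_span_singleton_self _
  rw [mem_span_singleton_iff_eq_smul_of_apply_ne_zero (i := 2) (by simp)] at this
  simpa using congrFun this 1

end LinesInThreeSpace

section SubgroupsOfZModCube

variable {p : ℕ} [Fact p.Prime]

theorem nonempty_quotient_addEquiv_and_forall_standardFrame_notMem_iff
    (K : AddSubgroup (Fin 3 → ZMod p)) :
    (Nonempty ((Fin 3 → ZMod p) ⧸ K ≃+ ZMod p × ZMod p) ∧ ∀ j, standardFrame (ZMod p) j ∉ K) ↔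
      (∃ r s : ZMod p, ¬(r = 0 ∧ s = 0) ∧ ¬(r = -1 ∧ s = -1) ∧
          K = AddSubgroup.closure {![r, s, -1]}) ∨
        (∃ l : ZMod p, l ≠ 0 ∧ K = AddSubgroup.closure {![l, -1, 0]}) := by
  rw [nonempty_quotient_addEquiv_iff (p := p) K (by simp)]
  constructor
  · rintro ⟨⟨v, hv, rfl⟩, hF⟩
    simp only [AddSubgroup.closure_eq_toAddSubgroup_span (n := p), toAddSubgroup_inj,
      mem_toAddSubgroup] at hF ⊢
    exact (forall_standardFrame_notMem_span_iff hv).mp hF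
  · rintro (⟨r, s, h0, h1, rfl⟩ | ⟨l, hl, rfl⟩)
    · refine ⟨⟨![r, s, -1], fun h ↦ by simpa using congrFun h 2, rfl⟩, ?_⟩
      simpa only [AddSubgroup.closure_eq_toAddSubgroup_span (n := p), mem_toAddSubgroup] using
        (forall_standardFrame_notMem_span_first r s).mpr ⟨h0, h1⟩
    · refine ⟨⟨![l, -1, 0], fun h ↦ by simpa using congrFun h 1, rfl⟩, ?_⟩
      simpa only [AddSubgroup.closure_eq_toAddSubgroup_span (n := p), mem_toAddSubgroup] using
        (forall_standardFrame_notMem_span_second l).mpr hl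

theorem ncard_setOf_closure_families :
    {K : AddSubgroup (Fin 3 → ZMod p) |
      (∃ r s : ZMod p, ¬(r = 0 ∧ s = 0) ∧ ¬(r = -1 ∧ s = -1) ∧
          K = AddSubgroup.closure {![r, s, -1]}) ∨
        (∃ l : ZMod p, l ≠ 0 ∧ K = AddSubgroup.closure {![l, -1, 0]})}.ncard = p ^ 2 + p - 3 := by
  set first := fun x : ZMod p × ZMod p ↦ AddSubgroup.closure {![x.1, x.2, -1]}
  set second := fun l : ZMod p ↦ AddSubgroup.closure {![l, -1, 0]}
  have hset : {K : AddSubgroup (Fin 3 → ZMod p) |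
      (∃ r s : ZMod p, ¬(r = 0 ∧ s = 0) ∧ ¬(r = -1 ∧ s = -1) ∧
          K = AddSubgroup.closure {![r, s, -1]}) ∨
        (∃ l : ZMod p, l ≠ 0 ∧ K = AddSubgroup.closure {![l, -1, 0]})} =
      first '' {(0, 0), (-1, -1)}ᶜ ∪ second '' {0}ᶜ := by
    ext K
    simp [first, second, Prod.ext_iff, eq_comm, and_assoc]
  have hfirst : Function.Injective first := by
    simpa only [first, AddSubgroup.closure_eq_toAddSubgroup_span (n := p), Function.comp_def]
      using Submodule.toAddSubgroup_injective.comp span_singleton_injective_first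
  have hsecond : Function.Injective second := by
    simpa only [second, AddSubgroup.closure_eq_toAddSubgroup_span (n := p), Function.comp_def]
      using Submodule.toAddSubgroup_injective.comp span_singleton_injective_second
  have hdisj : Disjoint (first '' {(0, 0), (-1, -1)}ᶜ) (second '' {0}ᶜ) := by
    refine Set.disjoint_left.mpr ?_
    rintro K ⟨x, -, rfl⟩ ⟨l, -, hl⟩
    refine span_singleton_first_ne_second x.1 x.2 l (toAddSubgroup_injective ?_)
    simpa only [first, second, AddSubgroup.closure_eq_toAddSubgroup_span (n := p)] using hl.symm
  rw [hset, Set.ncard_union_eq hdisj, Set.ncard_image_of_injective _ hfirst,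
    Set.ncard_image_of_injective _ hsecond, Set.ncard_compl, Set.ncard_compl,
    Set.ncard_pair (by simp), Set.ncard_singleton, Nat.card_prod, Nat.card_zmod, sq]
  have hp := (Fact.out : p.Prime).two_le
  have := Nat.mul_le_mul hp hp
  omega

end SubgroupsOfZModCube

theorem stmt7_general (p : ℕ) [Fact p.Prime]
    (a : Fin 4 → (Fin 3 → ZMod p))
    (ha : ∀ j : Fin 3, a j.castSucc = Pi.single j 1)
    (hlast : a 3 = -(a 0 + a 1 + a 2)) :
    (∀ K : AddSubgroup (Fin 3 → ZMod p),
      (Nonempty ((Fin 3 → ZMod p) ⧸ K ≃+ (ZMod p × ZMod p)) ∧ ∀ j, a j ∉ K) ↔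
      ((∃ r s : ZMod p, ¬(r = 0 ∧ s = 0) ∧ ¬(r = -1 ∧ s = -1) ∧
          K = AddSubgroup.closure {r • a 0 + s • a 1 - a 2}) ∨
       (∃ l : ZMod p, l ≠ 0 ∧ K = AddSubgroup.closure {l • a 0 - a 1}))) ∧
    Nat.card {K : AddSubgroup (Fin 3 → ZMod p) //
      Nonempty ((Fin 3 → ZMod p) ⧸ K ≃+ (ZMod p × ZMod p)) ∧ ∀ j, a j ∉ K} =
      p ^ 2 + p - 3 := by
  obtain rfl := eq_standardFrame a ha hlast
  have hfirst (r s : ZMod p) : r • standardFrame (ZMod p) 0 + s • standardFrame (ZMod p) 1 -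
      standardFrame (ZMod p) 2 = ![r, s, -1] := by
    ext i; fin_cases i <;> simp [standardFrame]
  have hsecond (l : ZMod p) :
      l • standardFrame (ZMod p) 0 - standardFrame (ZMod p) 1 = ![l, -1, 0] := by
    ext i; fin_cases i <;> simp [standardFrame]
  simp only [hfirst, hsecond]
  refine ⟨nonempty_quotient_addEquiv_and_forall_standardFrame_notMem_iff, ?_⟩
  simp only [nonempty_quotient_addEquiv_and_forall_standardFrame_notMem_iff]
  exact ncard_setOf_closure_families

/-- For `p ≥ 3` prime and `H = ⟨a_1,a_2,a_3⟩ ≅ (ℤ/pℤ)³` (additively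
`Fin 3 → ZMod p`, `a_4 := -(a_1+a_2+a_3)`), the set `F(p,3)` of subgroups
`K ≤ H` with `H/K ≅ (ℤ/pℤ)²` and `a_j ∉ K` for `j = 1,2,3,4` consists exactly
of the groups `K(r,s) = ⟨a_1^r a_2^s a_3^{-1}⟩` with
`(r,s) ∉ {(0,0),(p-1,p-1)}` and the groups `K(l) = ⟨a_1^l a_2^{-1}⟩` with
`l ∈ {1,…,p-1}`; in particular `F(p,3)` has exactly `p² + p - 3` elements. -/
theorem stmt7 (p : ℕ) [Fact p.Prime] (hp : 3 ≤ p)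
    (a : Fin 4 → (Fin 3 → ZMod p))
    (ha : ∀ j : Fin 3, a j.castSucc = Pi.single j 1)
    (hlast : a 3 = -(a 0 + a 1 + a 2)) :
    (∀ K : AddSubgroup (Fin 3 → ZMod p),
      (Nonempty ((Fin 3 → ZMod p) ⧸ K ≃+ (ZMod p × ZMod p)) ∧ ∀ j, a j ∉ K) ↔
      ((∃ r s : ZMod p, ¬(r = 0 ∧ s = 0) ∧ ¬(r = -1 ∧ s = -1) ∧
          K = AddSubgroup.closure {r • a 0 + s • a 1 - a 2}) ∨
       (∃ l : ZMod p, l ≠ 0 ∧ K = AddSubgroup.closure {l • a 0 - a 1}))) ∧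
    Nat.card {K : AddSubgroup (Fin 3 → ZMod p) //
      Nonempty ((Fin 3 → ZMod p) ⧸ K ≃+ (ZMod p × ZMod p)) ∧ ∀ j, a j ∉ K} =
      p ^ 2 + p - 3 :=
  stmt7_general p a ha hlast
end

section
/- Let p ≥ 3 be prime, H = ⟨a_1, a_2, a_3⟩ ≅ (Z/pZ)^3 with a_4 := (a_1a_2a_3)^{-1}, and let Q_8* ≤ Aut(H) be the subgroup generated by the permutations (1 2)(3 4) and (2 3 4) of the indices of a_1, a_2, a_3, a_4 (so Q_8* ≅ A_4). Then no subgroup K ∈ F(p,3) is invariant under Q_8*. -/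
/-!
A subgroup `K` with `H ⧸ K ≅ (ℤ/pℤ)²` has order `p`, so it is the `ZMod p`-line through any of
its nonzero elements `v`. If `K` is invariant under `Φ` and `Ψ`, then `v` is a common eigenvector
of both. In coordinates, the `Φ`-equation forces eigenvalue `-1` unless `v 2 = 0`; eigenvalue `-1`
means `v 2 = v 0 + v 1`, and then the `Ψ`-equations give `2 v 1 = 0`, hence `v 2 = 0` after all
since `p` is odd. Once `v 2 = 0`, the `Ψ`- and `Φ`-equations kill `v 1` and then `v 0`.
-/

theorem AddSubgroup.card_eq_of_card_quotient {G : Type*} [AddGroup G] {K : AddSubgroup G}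
    {m n : ℕ} (hG : Nat.card G = m * n) (hQ : Nat.card (G ⧸ K) = m) (hm : m ≠ 0) :
    Nat.card K = n := by
  rw [K.card_eq_card_quotient_mul_card_addSubgroup, hQ] at hG
  exact Nat.eq_of_mul_eq_mul_left (Nat.pos_of_ne_zero hm) hG

section PrimeOrder

variable {p : ℕ} [Fact p.Prime] {M : Type*} [AddCommGroup M] [Module (ZMod p) M]
  {K : AddSubgroup M}

theorem AddSubgroup.exists_smul_eq_of_card_eq_prime (hK : Nat.card K = p) {v w : M}
    (hv : v ∈ K) (hv0 : v ≠ 0) (hw : w ∈ K) : ∃ c : ZMod p, c • v = w := by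
  obtain ⟨k, hk⟩ := AddSubgroup.mem_zmultiples_iff.mp
    (mem_zmultiples_of_prime_card hK (g := ⟨v, hv⟩) (g' := ⟨w, hw⟩) (by simpa using hv0))
  exact ⟨k, by rw [Int.cast_smul_eq_zsmul]; exact congrArg Subtype.val hk⟩

theorem AddSubgroup.exists_apply_eq_smul_of_map_eq (hK : Nat.card K = p) {f : M →+ M}
    (hf : K.map f = K) {v : M} (hv : v ∈ K) (hv0 : v ≠ 0) : ∃ c : ZMod p, f v = c • v := by
  obtain ⟨c, hc⟩ := K.exists_smul_eq_of_card_eq_prime hK hv hv0 (hf ▸ K.mem_map_of_mem f hv)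
  exact ⟨c, hc.symm⟩

end PrimeOrder

theorem map_eq_sum_smul_single {n : ℕ} {ι M : Type*} [Fintype ι] [DecidableEq ι]
    [AddCommGroup M] [Module (ZMod n) M] (f : (ι → ZMod n) →+ M) (v : ι → ZMod n) :
    f v = ∑ i, v i • f (Pi.single i 1) := by
  conv_lhs => rw [← Finset.univ_sum_single v]
  simp only [map_sum, ← ZMod.map_smul, ← Pi.single_smul', smul_eq_mul, mul_one]

theorem eq_zero_of_smul_eq_of_smul_eq {R : Type*} [CommRing R] [NoZeroDivisors R]
    (h2 : (2 : R) ≠ 0) {c d : R} {v : Fin 3 → R}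
    (hc : c • v = ![v 1 - v 2, v 0 - v 2, -v 2])
    (hd : d • v = ![v 0 - v 2, -v 2, v 1 - v 2]) : v = 0 := by
  have hc0 := congrFun hc 0
  have hc1 := congrFun hc 1
  have hc2 := congrFun hc 2
  have hd0 := congrFun hd 0
  have hd1 := congrFun hd 1
  have hd2 := congrFun hd 2
  simp only [Pi.smul_apply, smul_eq_mul, Matrix.cons_val] at hc0 hc1 hc2 hd0 hd1 hd2
  have hz : v 2 = 0 := by
    by_contra hz
    have hc_neg : c = -1 := by
      have : (c + 1) * v 2 = 0 := by linear_combination hc2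
      exact eq_neg_of_add_eq_zero_left ((mul_eq_zero.mp this).resolve_right hz)
    have hz_sum : v 2 = v 0 + v 1 := by linear_combination hc0 - v 0 * hc_neg
    have hy : v 1 = 0 := by
      have : 2 * v 1 = 0 := by linear_combination hd0 + hd1 - hd2 + (d - 1) * hz_sum
      exact (mul_eq_zero.mp this).resolve_left h2
    exact hz (by linear_combination hd1 - d * hy)
  have hy : v 1 = 0 := by linear_combination -hd2 + d * hz + hz
  have hx : v 0 = 0 := by linear_combination -hc1 + c * hy + hz
  ext i
  fin_cases i <;> assumption

theorem stmt9_general (p : ℕ) [Fact p.Prime] (hp : 3 ≤ p)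
    (a : Fin 4 → (Fin 3 → ZMod p))
    (ha : ∀ j : Fin 3, a j.castSucc = Pi.single j 1)
    (hlast : a 3 = -(a 0 + a 1 + a 2))
    (Φ Ψ : (Fin 3 → ZMod p) ≃+ (Fin 3 → ZMod p))
    (hΦ0 : Φ (a 0) = a 1) (hΦ1 : Φ (a 1) = a 0)
    (hΦ2 : Φ (a 2) = a 3)
    (hΨ0 : Ψ (a 0) = a 0) (hΨ1 : Ψ (a 1) = a 2)
    (hΨ2 : Ψ (a 2) = a 3) :
    ∀ K : AddSubgroup (Fin 3 → ZMod p),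
      (Nonempty ((Fin 3 → ZMod p) ⧸ K ≃+ (ZMod p × ZMod p)) ∧ ∀ j, a j ∉ K) →
      ¬(AddSubgroup.map Φ.toAddMonoidHom K = K ∧ AddSubgroup.map Ψ.toAddMonoidHom K = K) := by
  rintro K ⟨⟨e⟩, -⟩ ⟨hΦK, hΨK⟩
  have hK : Nat.card K = p := K.card_eq_of_card_quotient (m := p ^ 2)
    (by simp [Nat.card_eq_fintype_card, ZMod.card]; ring)
    (by simp [Nat.card_congr e.toEquiv, Nat.card_eq_fintype_card, ZMod.card, sq])
    (pow_ne_zero 2 (Fact.out : p.Prime).ne_zero)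
  obtain ⟨v, hvK, hv0⟩ := K.bot_or_exists_ne_zero.resolve_left fun hbot => by
    simp [hbot, (Fact.out : p.Prime).ne_one.symm] at hK
  obtain ⟨c, hc⟩ := K.exists_apply_eq_smul_of_map_eq hK hΦK hvK hv0
  obtain ⟨d, hd⟩ := K.exists_apply_eq_smul_of_map_eq hK hΨK hvK hv0
  have h0 : Pi.single 0 1 = a 0 := (ha 0).symm
  have h1 : Pi.single 1 1 = a 1 := (ha 1).symm
  have h2 : Pi.single 2 1 = a 2 := (ha 2).symm
  have hcoord : ∀ f : (Fin 3 → ZMod p) ≃+ (Fin 3 → ZMod p),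
      f v = v 0 • f (a 0) + v 1 • f (a 1) + v 2 • f (a 2) := fun f => by
    rw [← f.coe_toAddMonoidHom, map_eq_sum_smul_single, Fin.sum_univ_three, h0, h1, h2]
  have hΦv : Φ v = ![v 1 - v 2, v 0 - v 2, -v 2] := by
    rw [hcoord, hΦ0, hΦ1, hΦ2, hlast]
    ext i; fin_cases i <;> simp [← h0, ← h1, ← h2] <;> ring
  have hΨv : Ψ v = ![v 0 - v 2, -v 2, v 1 - v 2] := by
    rw [hcoord, hΨ0, hΨ1, hΨ2, hlast]
    ext i; fin_cases i <;> simp [← h0, ← h1, ← h2] <;> ring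
  have htwo : (2 : ZMod p) ≠ 0 := Ring.two_ne_zero (by rw [ZMod.ringChar_zmod_n]; omega)
  exact hv0 (eq_zero_of_smul_eq_of_smul_eq htwo (hc ▸ hΦv) (hd ▸ hΨv))

/-- For `p ≥ 3` prime, `H = ⟨a_1,a_2,a_3⟩ ≅ (ℤ/pℤ)³` with
`a_4 := -(a_1+a_2+a_3)`, let `Φ` and `Ψ` be the automorphisms of `H` induced
by the permutations `(1 2)(3 4)` and `(2 3 4)` of `a_1,a_2,a_3,a_4`
(generating `Q₈* ≅ A₄`).  Then no subgroup `K ∈ F(p,3)` (i.e. with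
`H/K ≅ (ℤ/pℤ)²` and `a_j ∉ K` for all `j`) is invariant under both `Φ` and
`Ψ`, hence none is `Q₈*`-invariant. -/
theorem stmt9 (p : ℕ) [Fact p.Prime] (hp : 3 ≤ p)
    (a : Fin 4 → (Fin 3 → ZMod p))
    (ha : ∀ j : Fin 3, a j.castSucc = Pi.single j 1)
    (hlast : a 3 = -(a 0 + a 1 + a 2))
    (Φ Ψ : (Fin 3 → ZMod p) ≃+ (Fin 3 → ZMod p))
    (hΦ0 : Φ (a 0) = a 1) (hΦ1 : Φ (a 1) = a 0)
    (hΦ2 : Φ (a 2) = a 3) (hΦ3 : Φ (a 3) = a 2)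
    (hΨ0 : Ψ (a 0) = a 0) (hΨ1 : Ψ (a 1) = a 2)
    (hΨ2 : Ψ (a 2) = a 3) (hΨ3 : Ψ (a 3) = a 1) :
    ∀ K : AddSubgroup (Fin 3 → ZMod p),
      (Nonempty ((Fin 3 → ZMod p) ⧸ K ≃+ (ZMod p × ZMod p)) ∧ ∀ j, a j ∉ K) →
      ¬(AddSubgroup.map Φ.toAddMonoidHom K = K ∧ AddSubgroup.map Ψ.toAddMonoidHom K = K) :=
  stmt9_general p hp a ha hlast Φ Ψ hΦ0 hΦ1 hΦ2 hΨ0 hΨ1 hΨ2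
end

section
/- Let p ≥ 3 be prime, H = ⟨a_1, a_2, a_3⟩ ≅ (Z/pZ)^3 with a_4 := (a_1a_2a_3)^{-1}, and let Q_3* = ⟨Φ_5⟩ where Φ_5 is the 3-cycle sending a_2 ↦ a_3 ↦ a_4 ↦ a_2 and fixing a_1. If p = 3 or p ≡ 2 mod 3, then no K ∈ F(p,3) is Q_3*-invariant. If p ≡ 1 mod 3, the Q_3*-invariant members of F(p,3) are exactly the groups K(s/(1-s), s) for s ∈ {1,...,p-1} with s^2 + s + 1 ≡ 0 mod p (the quotient s/(1-s) computed in Z/pZ). -/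
/-!
A member `K` of `F(p,3)` has order `p`, so it is the line spanned by any of its nonzero vectors
`v`, and `Φ₅`-invariance of `K` says that `v` is an eigenvector of `Φ₅`. In the coordinates of the
basis `a₁, a₂, a₃` the eigenvalue equation `Φ₅ v = c v` forces either `v ∈ ⟨a₁⟩`, which is
excluded, or `c² + c + 1 = 0`, `c ≠ 1` and `v ∈ ⟨(s/(1-s), s, -1)⟩` for the other root `s = c²`.
A root `s ≠ 1` of `X² + X + 1` has multiplicative order `3`, which forces `p ≡ 1 mod 3`.
-/

namespace ZModModule

section

variable {n : ℕ} {M : Type*} [AddCommGroup M] [Module (ZMod n) M]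

theorem mem_closure_singleton_iff_exists_smul {v w : M} :
    w ∈ AddSubgroup.closure {v} ↔ ∃ c : ZMod n, c • v = w := by
  refine ⟨fun h => ?_, ?_⟩
  · obtain ⟨k, rfl⟩ := AddSubgroup.mem_closure_singleton.1 h
    exact ⟨k, Int.cast_smul_eq_zsmul _ _ _⟩
  · rintro ⟨c, rfl⟩
    exact ZMod.smul_mem (AddSubgroup.mem_closure_singleton_self v) c

end

variable {p : ℕ} [Fact p.Prime] {M : Type*} [AddCommGroup M] [Module (ZMod p) M]

theorem closure_smul_singleton {c : ZMod p} (hc : c ≠ 0) (v : M) :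
    AddSubgroup.closure {c • v} = AddSubgroup.closure {v} := by
  refine le_antisymm ?_ ?_ <;> rw [AddSubgroup.closure_le, Set.singleton_subset_iff]
  · exact ZMod.smul_mem (AddSubgroup.mem_closure_singleton_self v) c
  · simpa [smul_smul, hc] using
      ZMod.smul_mem (AddSubgroup.mem_closure_singleton_self (c • v)) c⁻¹

theorem map_closure_singleton_eq_self_iff (Φ : M ≃+ M) {v : M} (hv : v ≠ 0) :
    AddSubgroup.map Φ.toAddMonoidHom (AddSubgroup.closure {v}) = AddSubgroup.closure {v} ↔
      ∃ c : ZMod p, Φ v = c • v := by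
  rw [AddMonoidHom.map_closure, Set.image_singleton]
  constructor
  · intro h
    obtain ⟨c, hc⟩ := (mem_closure_singleton_iff_exists_smul (n := p)).1
      (h ▸ AddSubgroup.mem_closure_singleton_self _)
    exact ⟨c, hc.symm⟩
  · rintro ⟨c, hc⟩
    have hc0 : c ≠ 0 := by
      rintro rfl
      exact hv (Φ.map_eq_zero_iff.1 (by rw [hc, zero_smul]))
    exact (show Φ.toAddMonoidHom v = c • v from hc) ▸ closure_smul_singleton hc0 v

end ZModModule

theorem AddSubgroup.eq_closure_singleton_of_card_eq_prime {G : Type*} [AddGroup G] {p : ℕ}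
    [hp : Fact p.Prime] {K : AddSubgroup G} (hK : Nat.card K = p) {v : G} (hv : v ∈ K)
    (hv0 : v ≠ 0) : K = AddSubgroup.closure {v} := by
  have : Finite K := Nat.finite_of_card_ne_zero (hK ▸ hp.out.ne_zero)
  have hord : addOrderOf v = p := by
    have hdvd : addOrderOf v ∣ p := hK ▸ K.addOrderOf_dvd_natCard hv
    exact (hp.out.eq_one_or_self_of_dvd _ hdvd).resolve_left (by simpa using hv0)
  refine (AddSubgroup.eq_of_le_of_card_ge ((AddSubgroup.closure_le K).2 (by simpa)) ?_).symm
  rw [← AddSubgroup.zmultiples_eq_closure, Nat.card_zmultiples, hord, hK]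

theorem card_eq_of_quotient_addEquiv_prod {n : ℕ} [NeZero n] {K : AddSubgroup (Fin 3 → ZMod n)}
    (e : (Fin 3 → ZMod n) ⧸ K ≃+ ZMod n × ZMod n) : Nat.card K = n := by
  have hn := NeZero.ne n
  have h := AddSubgroup.card_eq_card_quotient_mul_card_addSubgroup K
  rw [Nat.card_congr e.toEquiv] at h
  simp only [Nat.card_eq_fintype_card, Fintype.card_pi, Fintype.card_prod, ZMod.card,
    Finset.prod_const, Finset.card_univ, Fintype.card_fin] at h
  exact (Nat.eq_of_mul_eq_mul_left (Nat.pos_of_ne_zero (mul_ne_zero hn hn))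
    (by rw [← h]; ring)).symm

namespace ZMod

variable {p : ℕ} [Fact p.Prime] {s : ZMod p}

theorem mod_three_eq_one_of_sq_add_self_add_one_eq_zero (hs : s ^ 2 + s + 1 = 0) (hs1 : s ≠ 1) :
    p % 3 = 1 := by
  have hs0 : s ≠ 0 := by
    rintro rfl
    simp at hs
  have hord : orderOf s = 3 := orderOf_eq_prime (by linear_combination (s - 1) * hs) hs1
  have hdvd : 3 ∣ p - 1 := hord ▸ orderOf_dvd_of_pow_eq_one (pow_card_sub_one_eq_one hs0)
  have := (Fact.out : p.Prime).one_lt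
  omega

theorem ne_one_of_sq_add_self_add_one_eq_zero (hs : s ^ 2 + s + 1 = 0) (hp : p ≠ 3) : s ≠ 1 := by
  rintro rfl
  have h3 : ((3 : ℕ) : ZMod p) = 0 := by
    push_cast
    linear_combination hs
  exact hp ((Nat.prime_dvd_prime_iff_eq Fact.out Nat.prime_three).1
    ((natCast_eq_zero_iff 3 p).1 h3))

end ZMod

/-- `Φ₅` in the coordinates of the basis `a₁, a₂, a₃`, in which `a₄ = (-1, -1, -1)`. -/
def phi5 {R : Type*} [CommRing R] (u : Fin 3 → R) : Fin 3 → R := ![u 0 - u 2, -u 2, u 1 - u 2]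

theorem apply_eq_phi5 {n : ℕ} (a : Fin 4 → (Fin 3 → ZMod n))
    (ha : ∀ j : Fin 3, a j.castSucc = Pi.single j 1) (hlast : a 3 = -(a 0 + a 1 + a 2))
    (Φ : (Fin 3 → ZMod n) ≃+ (Fin 3 → ZMod n))
    (hΦ0 : Φ (a 0) = a 0) (hΦ1 : Φ (a 1) = a 2) (hΦ2 : Φ (a 2) = a 3) (u : Fin 3 → ZMod n) :
    Φ u = phi5 u := by
  have ha0 : a 0 = Pi.single 0 1 := ha 0
  have ha1 : a 1 = Pi.single 1 1 := ha 1
  have ha2 : a 2 = Pi.single 2 1 := ha 2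
  have hu : u = u 0 • a 0 + u 1 • a 1 + u 2 • a 2 := by
    funext i
    fin_cases i <;> simp [ha0, ha1, ha2]
  rw [hu, map_add, map_add, ZMod.map_smul, ZMod.map_smul, ZMod.map_smul, hΦ0, hΦ1, hΦ2, hlast]
  funext i
  fin_cases i <;> simp [ha0, ha1, ha2, phi5] <;> ring

section Eigenvectors

variable {F : Type*} [Field F] {c : F} {v : Fin 3 → F}

theorem eq_smul_single_of_phi5_eq_smul (hv : phi5 v = c • v) (h2 : v 2 = 0) :
    v = v 0 • Pi.single 0 1 := by
  have h1 : v 1 - v 2 = c * v 2 := by simpa [phi5] using congrFun hv 2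
  funext i
  fin_cases i <;> simp [h2]
  linear_combination h1 + (1 + c) * h2

theorem exists_eq_smul_of_phi5_eq_smul (hv : phi5 v = c • v) (h2 : v 2 ≠ 0) :
    ∃ s : F, s ≠ 0 ∧ s ≠ 1 ∧ s ^ 2 + s + 1 = 0 ∧ v = (-v 2) • ![s / (1 - s), s, -1] := by
  have e0 : v 0 - v 2 = c * v 0 := by simpa [phi5] using congrFun hv 0
  have e1 : -v 2 = c * v 1 := by simpa [phi5] using congrFun hv 1
  have e2 : v 1 - v 2 = c * v 2 := by simpa [phi5] using congrFun hv 2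
  have hc : c ^ 2 + c + 1 = 0 := by
    have h : (c ^ 2 + c + 1) * v 2 = 0 := by linear_combination -c * e2 - e1
    exact (mul_eq_zero.1 h).resolve_right h2
  have hc1 : c ≠ 1 := by
    rintro rfl
    exact h2 (by linear_combination -e0)
  have hc0 : c ≠ 0 := by
    rintro rfl
    simp at hc
  have hc2 : 1 - c ^ 2 ≠ 0 := by
    intro h
    have : (c - 1) * (c + 1) = 0 := by linear_combination -h
    rcases mul_eq_zero.1 this with h' | h'
    · exact hc1 (by linear_combination h')
    · exact one_ne_zero (by linear_combination hc - c * h' : (1 : F) = 0)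
  -- `c` is a primitive cube root of unity, and `c²` is the other one
  refine ⟨c ^ 2, pow_ne_zero 2 hc0, fun h => hc2 (by rw [h]; ring),
    by linear_combination (c ^ 2 - c + 1) * hc, ?_⟩
  funext i
  fin_cases i <;> simp
  · field_simp
    linear_combination -c ^ 2 * e0 - v 0 * (c - 1) * hc
  · linear_combination e2 + v 2 * hc

theorem phi5_line {s : F} (hs : s ^ 2 + s + 1 = 0) (hs1 : s ≠ 1) :
    phi5 ![s / (1 - s), s, -1] = s ^ 2 • ![s / (1 - s), s, -1] := by
  have h1s : 1 - s ≠ 0 := sub_ne_zero.2 (Ne.symm hs1)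
  funext i
  fin_cases i <;> simp [phi5]
  · field_simp
    linear_combination (1 - s) * hs
  · linear_combination (1 - s) * hs
  · linear_combination hs

end Eigenvectors

section SubgroupK

variable {n : ℕ}

/-- The group `K(t, s) = ⟨a₁ᵗ a₂ˢ a₃⁻¹⟩`, written additively in the coordinates of `a₁, a₂, a₃`. -/
def subgroupK (t s : ZMod n) : AddSubgroup (Fin 3 → ZMod n) := AddSubgroup.closure {![t, s, -1]}

theorem mem_subgroupK_iff (t s : ZMod n) (u : Fin 3 → ZMod n) :
    u ∈ subgroupK t s ↔ u 0 + t * u 2 = 0 ∧ u 1 + s * u 2 = 0 := by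
  rw [subgroupK, ZModModule.mem_closure_singleton_iff_exists_smul (n := n)]
  constructor
  · rintro ⟨c, rfl⟩
    simp only [Pi.smul_apply, Matrix.cons_val, smul_eq_mul]
    constructor <;> ring
  · rintro ⟨h0, h1⟩
    refine ⟨-u 2, funext fun i => ?_⟩
    fin_cases i <;> simp
    · linear_combination -h0
    · linear_combination -h1

def lineProjection (t s : ZMod n) : (Fin 3 → ZMod n) →+ ZMod n × ZMod n :=
  AddMonoidHom.mk' (fun u => (u 0 + t * u 2, u 1 + s * u 2)) fun u w => by
    ext <;> simp only [Pi.add_apply, Prod.fst_add, Prod.snd_add] <;> ring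

theorem ker_lineProjection (t s : ZMod n) :
    (lineProjection t s).ker = subgroupK t s := by
  ext u
  rw [AddMonoidHom.mem_ker, mem_subgroupK_iff]
  simp [lineProjection, Prod.ext_iff]

theorem lineProjection_surjective (t s : ZMod n) : Function.Surjective (lineProjection t s) :=
  fun q => ⟨![q.1, q.2, 0], by simp [lineProjection]⟩

theorem nonempty_quotient_subgroupK_addEquiv (t s : ZMod n) :
    Nonempty ((Fin 3 → ZMod n) ⧸ subgroupK t s ≃+ ZMod n × ZMod n) :=
  ker_lineProjection t s ▸
    ⟨QuotientAddGroup.quotientKerEquivOfSurjective _ (lineProjection_surjective t s)⟩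

end SubgroupK

variable {p : ℕ} [Fact p.Prime]

theorem exists_eq_subgroupK_of_map_eq (Φ : (Fin 3 → ZMod p) ≃+ (Fin 3 → ZMod p))
    (hΦ : ∀ u, Φ u = phi5 u) {K : AddSubgroup (Fin 3 → ZMod p)}
    (e : (Fin 3 → ZMod p) ⧸ K ≃+ ZMod p × ZMod p) (h0 : Pi.single 0 1 ∉ K)
    (hmap : AddSubgroup.map Φ.toAddMonoidHom K = K) :
    ∃ s : ZMod p, s ≠ 0 ∧ s ≠ 1 ∧ s ^ 2 + s + 1 = 0 ∧ K = subgroupK (s / (1 - s)) s := by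
  have hK := card_eq_of_quotient_addEquiv_prod e
  obtain ⟨v, hvK, hv0⟩ := K.bot_or_exists_ne_zero.resolve_left fun h => by
    simp [h, (Fact.out : p.Prime).ne_one.symm] at hK
  rw [AddSubgroup.eq_closure_singleton_of_card_eq_prime hK hvK hv0] at hmap h0 ⊢
  obtain ⟨c, hc⟩ := (ZModModule.map_closure_singleton_eq_self_iff (p := p) Φ hv0).1 hmap
  rw [hΦ] at hc
  by_cases h2 : v 2 = 0
  · have hv : v = v 0 • Pi.single 0 1 := eq_smul_single_of_phi5_eq_smul hc h2
    have hv00 : v 0 ≠ 0 := fun h => hv0 (by rw [hv, h, zero_smul])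
    rw [hv, ZModModule.closure_smul_singleton hv00] at h0
    exact absurd (AddSubgroup.mem_closure_singleton_self _) h0
  · obtain ⟨s, hs0, hs1, hs, hv⟩ := exists_eq_smul_of_phi5_eq_smul hc h2
    refine ⟨s, hs0, hs1, hs, ?_⟩
    rw [hv, ZModModule.closure_smul_singleton (neg_ne_zero.2 h2), subgroupK]

theorem map_subgroupK_eq_self (Φ : (Fin 3 → ZMod p) ≃+ (Fin 3 → ZMod p))
    (hΦ : ∀ u, Φ u = phi5 u) {s : ZMod p} (hs1 : s ≠ 1) (hs : s ^ 2 + s + 1 = 0) :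
    AddSubgroup.map Φ.toAddMonoidHom (subgroupK (s / (1 - s)) s) = subgroupK (s / (1 - s)) s :=
  (ZModModule.map_closure_singleton_eq_self_iff Φ fun h => by simpa using congrFun h 2).2
    ⟨s ^ 2, by rw [hΦ, phi5_line hs hs1]⟩

theorem apply_notMem_subgroupK (a : Fin 4 → (Fin 3 → ZMod p))
    (ha : ∀ j : Fin 3, a j.castSucc = Pi.single j 1) (hlast : a 3 = -(a 0 + a 1 + a 2))
    {s : ZMod p} (hs0 : s ≠ 0) (hs : s ^ 2 + s + 1 = 0) (j : Fin 4) :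
    a j ∉ subgroupK (s / (1 - s)) s := by
  have hs1 : 1 + s ≠ 0 := fun h =>
    one_ne_zero (by linear_combination hs - s * h : (1 : ZMod p) = 0)
  have ha0 : a 0 = Pi.single 0 1 := ha 0
  have ha1 : a 1 = Pi.single 1 1 := ha 1
  have ha2 : a 2 = Pi.single 2 1 := ha 2
  rw [mem_subgroupK_iff]
  fin_cases j <;> simp [ha0, ha1, ha2, hlast, hs0]
  intro _ h
  exact hs1 (by linear_combination -h)

theorem invariant_member_iff_eq_subgroupK (a : Fin 4 → (Fin 3 → ZMod p))
    (ha : ∀ j : Fin 3, a j.castSucc = Pi.single j 1) (hlast : a 3 = -(a 0 + a 1 + a 2))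
    (Φ : (Fin 3 → ZMod p) ≃+ (Fin 3 → ZMod p)) (hΦ : ∀ u, Φ u = phi5 u)
    (K : AddSubgroup (Fin 3 → ZMod p)) :
    ((Nonempty ((Fin 3 → ZMod p) ⧸ K ≃+ (ZMod p × ZMod p)) ∧ ∀ j, a j ∉ K) ∧
        AddSubgroup.map Φ.toAddMonoidHom K = K) ↔
      ∃ s : ZMod p, s ≠ 0 ∧ s ≠ 1 ∧ s ^ 2 + s + 1 = 0 ∧
        K = subgroupK (s / (1 - s)) s := by
  constructor
  · rintro ⟨⟨⟨e⟩, hK⟩, hmap⟩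
    exact exists_eq_subgroupK_of_map_eq Φ hΦ e (ha 0 ▸ hK 0) hmap
  · rintro ⟨s, hs0, hs1, hs, rfl⟩
    exact ⟨⟨nonempty_quotient_subgroupK_addEquiv _ _, apply_notMem_subgroupK a ha hlast hs0 hs⟩,
      map_subgroupK_eq_self Φ hΦ hs1 hs⟩

theorem stmt12_general (p : ℕ) [Fact p.Prime]
    (a : Fin 4 → (Fin 3 → ZMod p))
    (ha : ∀ j : Fin 3, a j.castSucc = Pi.single j 1)
    (hlast : a 3 = -(a 0 + a 1 + a 2))
    (Φ : (Fin 3 → ZMod p) ≃+ (Fin 3 → ZMod p))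
    (hΦ0 : Φ (a 0) = a 0) (hΦ1 : Φ (a 1) = a 2)
    (hΦ2 : Φ (a 2) = a 3) :
    ((p = 3 ∨ p % 3 = 2) →
      ∀ K : AddSubgroup (Fin 3 → ZMod p),
        (Nonempty ((Fin 3 → ZMod p) ⧸ K ≃+ (ZMod p × ZMod p)) ∧ ∀ j, a j ∉ K) →
        AddSubgroup.map Φ.toAddMonoidHom K ≠ K) ∧
    (p % 3 = 1 →
      ∀ K : AddSubgroup (Fin 3 → ZMod p),
        ((Nonempty ((Fin 3 → ZMod p) ⧸ K ≃+ (ZMod p × ZMod p)) ∧ ∀ j, a j ∉ K) ∧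
          AddSubgroup.map Φ.toAddMonoidHom K = K) ↔
        (∃ s : ZMod p, s ≠ 0 ∧ s ^ 2 + s + 1 = 0 ∧
          K = AddSubgroup.closure {(s / (1 - s)) • a 0 + s • a 1 - a 2})) := by
  have hmember :=
    invariant_member_iff_eq_subgroupK a ha hlast Φ (apply_eq_phi5 a ha hlast Φ hΦ0 hΦ1 hΦ2)
  have hgen (s : ZMod p) :
      AddSubgroup.closure {(s / (1 - s)) • a 0 + s • a 1 - a 2} = subgroupK (s / (1 - s)) s := by
    congr
    funext i
    fin_cases i <;> simp [show a 0 = Pi.single 0 1 from ha 0, show a 1 = Pi.single 1 1 from ha 1,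
      show a 2 = Pi.single 2 1 from ha 2]
  refine ⟨fun hmod K hK hmap => ?_, fun hmod K => ?_⟩
  · obtain ⟨s, -, hs1, hs, -⟩ := (hmember K).1 ⟨hK, hmap⟩
    have := ZMod.mod_three_eq_one_of_sq_add_self_add_one_eq_zero hs hs1
    omega
  · simp_rw [hmember, hgen]
    refine exists_congr fun s => ⟨fun ⟨hs0, _, hs, hK⟩ => ⟨hs0, hs, hK⟩, fun ⟨hs0, hs, hK⟩ =>
      ⟨hs0, ZMod.ne_one_of_sq_add_self_add_one_eq_zero hs (by omega), hs, hK⟩⟩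

/-- For `p ≥ 3` prime, `H = ⟨a_1,a_2,a_3⟩ ≅ (ℤ/pℤ)³` with
`a_4 := -(a_1+a_2+a_3)`, let `Φ₅` be the automorphism of `H` fixing `a_1` and
cycling `a_2 ↦ a_3 ↦ a_4 ↦ a_2` (generating `Q₃*`).  If `p = 3` or
`p ≡ 2 (mod 3)` then no `K ∈ F(p,3)` is `Φ₅`-invariant; if `p ≡ 1 (mod 3)`,
the `Φ₅`-invariant members of `F(p,3)` are exactly the groups
`K(s/(1-s), s)` for `s ∈ {1,…,p-1}` with `s² + s + 1 ≡ 0 (mod p)`. -/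
theorem stmt12 (p : ℕ) [Fact p.Prime] (hp : 3 ≤ p)
    (a : Fin 4 → (Fin 3 → ZMod p))
    (ha : ∀ j : Fin 3, a j.castSucc = Pi.single j 1)
    (hlast : a 3 = -(a 0 + a 1 + a 2))
    (Φ : (Fin 3 → ZMod p) ≃+ (Fin 3 → ZMod p))
    (hΦ0 : Φ (a 0) = a 0) (hΦ1 : Φ (a 1) = a 2)
    (hΦ2 : Φ (a 2) = a 3) (hΦ3 : Φ (a 3) = a 1) :
    ((p = 3 ∨ p % 3 = 2) →
      ∀ K : AddSubgroup (Fin 3 → ZMod p),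
        (Nonempty ((Fin 3 → ZMod p) ⧸ K ≃+ (ZMod p × ZMod p)) ∧ ∀ j, a j ∉ K) →
        AddSubgroup.map Φ.toAddMonoidHom K ≠ K) ∧
    (p % 3 = 1 →
      ∀ K : AddSubgroup (Fin 3 → ZMod p),
        ((Nonempty ((Fin 3 → ZMod p) ⧸ K ≃+ (ZMod p × ZMod p)) ∧ ∀ j, a j ∉ K) ∧
          AddSubgroup.map Φ.toAddMonoidHom K = K) ↔
        (∃ s : ZMod p, s ≠ 0 ∧ s ^ 2 + s + 1 = 0 ∧
          K = AddSubgroup.closure {(s / (1 - s)) • a 0 + s • a 1 - a 2})) :=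
  stmt12_general p a ha hlast Φ hΦ0 hΦ1 hΦ2
end

section
/- The normalizer in S_6 of the subgroup ⟨u, v⟩ generated by u = (1 2 3)(4 5 6) and v = (1 4)(2 6)(3 5) is isomorphic to D_3 × D_3, and the quotient of this normalizer by ⟨u, v⟩ is isomorphic to D_3 of order 6, with coset representatives id, (4 5 6), (4 6 5), (2 3)(5 6), (2 3)(4 5), (2 3)(4 6). -/
/-!
A permutation `n` of a group `G` normalizing the left regular image of `G` induces an automorphism
`σ` with `n (g x) = σ g * n x`, hence `n x = σ x * n 1`. When every automorphism is inner,
`σ = conj c` and `n = (x ↦ c x c⁻¹ n(1))`, so the normalizer is the image of the left-right action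
`(a, b) ↦ (x ↦ a x b⁻¹)` of `G × G`, which is faithful when the centre is trivial. Both conditions
hold for `D₃`, and labelling `Fin 6` by `D₃` turns `u`, `v` into left multiplication by `r 1`,
`sr 0`. So the normalizer is `D₃ × D₃` with `⟨u, v⟩ = D₃ × 1`, the second projection is the
quotient map, and the listed representatives are the conjugations by
`1, r 2, r 1, sr 0, sr 1, sr 2`, whose second coordinates run once through `D₃`.
-/

open Equiv MulAction Subgroup

section Holomorph

variable (G : Type*) [Group G]

def mulLeftRight : G × G →* Perm G :=
  MonoidHom.mk' (fun p => ⟨fun x => p.1 * x * p.2⁻¹, fun x => p.1⁻¹ * x * p.2,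
      fun x => by group, fun x => by group⟩)
    fun p q => by ext x; simp [mul_assoc]

variable {G}

@[simp]
lemma mulLeftRight_apply (p : G × G) (x : G) : mulLeftRight G p x = p.1 * x * p.2⁻¹ := rfl

lemma mulLeftRight_comp_inl : (mulLeftRight G).comp (MonoidHom.inl G G) = toPermHom G G := by
  ext g x
  simp

lemma mulLeftRight_injective (hG : center G = ⊥) : Function.Injective (mulLeftRight G) := by
  refine (injective_iff_map_eq_one _).2 fun ⟨a, b⟩ h => ?_
  have hfix (x : G) : a * x * b⁻¹ = x := by simpa using DFunLike.congr_fun h x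
  have hab : a = b := by simpa [mul_inv_eq_one] using hfix 1
  subst hab
  have ha : a ∈ center G := mem_center_iff.2 fun x => (mul_inv_eq_iff_eq_mul.1 (hfix x)).symm
  simp_all

lemma mulLeftRight_mul_toPerm (p : G × G) (g : G) :
    mulLeftRight G p * toPerm g = toPerm (p.1 * g * p.1⁻¹) * mulLeftRight G p := by
  ext x
  simp [mul_assoc]

lemma range_mulLeftRight_le_normalizer :
    (mulLeftRight G).range ≤ normalizer ((toPermHom G G).range : Set (Perm G)) := by
  have conj_mem (p : G × G) (g : G) :
      mulLeftRight G p * toPerm g * (mulLeftRight G p)⁻¹ ∈ (toPermHom G G).range :=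
    ⟨p.1 * g * p.1⁻¹, by rw [mulLeftRight_mul_toPerm, mul_inv_cancel_right]; rfl⟩
  rintro _ ⟨p, rfl⟩ h
  refine ⟨fun ⟨g, hg⟩ => hg ▸ conj_mem p g, fun ⟨k, hk⟩ => ?_⟩
  have hh : h = mulLeftRight G p⁻¹ * toPerm k * (mulLeftRight G p⁻¹)⁻¹ := by
    rw [map_inv, inv_inv, ← toPermHom_apply, hk]
    group
  exact hh ▸ conj_mem p⁻¹ k

lemma normalizer_le_range_mulLeftRight (hG : Function.Surjective (MulAut.conj : G →* MulAut G)) :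
    normalizer ((toPermHom G G).range : Set (Perm G)) ≤ (mulLeftRight G).range := by
  intro n hn
  let toRange := MonoidHom.ofInjective (f := toPermHom G G) toPerm_injective
  obtain ⟨c, hc⟩ := hG ((toRange.trans (normalizerMonoidHom _ ⟨n, hn⟩)).trans toRange.symm)
  have hconj (g : G) : toPerm (c * g * c⁻¹) = n * toPerm g * n⁻¹ := by
    have := congrArg (fun σ : MulAut G => (toRange (σ g) : Perm G)) hc
    simp only [MulEquiv.trans_apply, MulEquiv.apply_symm_apply, MulAut.conj_apply] at this
    exact this
  refine ⟨(c, (n 1)⁻¹ * c), Equiv.ext fun x => ?_⟩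
  calc mulLeftRight G (c, (n 1)⁻¹ * c) x = c * x * c⁻¹ * n 1 := by simp [mul_assoc]
    _ = (n * toPerm x * n⁻¹ : Perm G) (n 1) := by rw [← hconj]; rfl
    _ = n x := by simp

theorem normalizer_range_toPermHom (hG : Function.Surjective (MulAut.conj : G →* MulAut G)) :
    normalizer ((toPermHom G G).range : Set (Perm G)) = (mulLeftRight G).range :=
  (normalizer_le_range_mulLeftRight hG).antisymm range_mulLeftRight_le_normalizer

theorem normalizer_range_comp_inl {K : Type*} [Group K]
    (hG : Function.Surjective (MulAut.conj : G →* MulAut G)) (T : Perm G ≃* K) :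
    normalizer (((T.toMonoidHom.comp (mulLeftRight G)).comp (MonoidHom.inl G G)).range : Set K) =
      (T.toMonoidHom.comp (mulLeftRight G)).range := by
  rw [MonoidHom.comp_assoc, mulLeftRight_comp_inl, MonoidHom.range_comp,
    ← map_equiv_normalizer_eq, normalizer_range_toPermHom hG, MonoidHom.range_comp]

end Holomorph

section ProdRange

variable {G H : Type*} [Group G] [Group H] {Φ : G × G →* H}

lemma mul_inv_mem_range_comp_inl_iff (hΦ : Function.Injective Φ) (p q : G × G) :
    Φ p * (Φ q)⁻¹ ∈ (Φ.comp (MonoidHom.inl G G)).range ↔ p.2 = q.2 := by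
  rw [← map_inv, ← map_mul]
  constructor
  · rintro ⟨g, hg⟩
    have := congrArg Prod.snd (hΦ hg)
    simpa [mul_inv_eq_one, eq_comm] using this
  · intro h
    exact ⟨p.1 * q.1⁻¹, congrArg Φ (Prod.ext rfl (by simp [h]))⟩

lemma exists_surjective_ker_eq_range_comp_inl (hΦ : Function.Injective Φ) :
    ∃ f : Φ.range →* G, Function.Surjective f ∧
      f.ker = (Φ.comp (MonoidHom.inl G G)).range.subgroupOf Φ.range := by
  let θ := MonoidHom.ofInjective hΦ
  refine ⟨(MonoidHom.snd G G).comp θ.symm.toMonoidHom, fun b => ⟨θ (1, b), by simp⟩, ?_⟩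
  ext x
  obtain ⟨p, rfl⟩ := θ.surjective x
  simpa [mem_subgroupOf, θ, MonoidHom.ofInjective_apply, mem_prod] using
    (mul_inv_mem_range_comp_inl_iff hΦ p 1).symm

lemma existsUnique_mul_inv_mem_range_comp_inl (hΦ : Function.Injective Φ) {ι : Type*}
    (c : ι → G) {d : ι → G} (hd : Function.Bijective d) (x : H) (hx : x ∈ Φ.range) :
    ∃! i, x * (Φ (c i, d i))⁻¹ ∈ (Φ.comp (MonoidHom.inl G G)).range := by
  obtain ⟨p, rfl⟩ := hx
  simp only [mul_inv_mem_range_comp_inl_iff hΦ]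
  exact hd.existsUnique p.2 |>.imp fun i => And.imp Eq.symm fun h j hj => h j hj.symm

end ProdRange

namespace DihedralGroup

lemma closure_r_one_sr_zero (n : ℕ) : closure {r 1, sr 0} = (⊤ : Subgroup (DihedralGroup n)) := by
  refine eq_top_iff.2 fun x _ => ?_
  have hr (i : ZMod n) : r i ∈ closure {r 1, sr 0} := by
    simpa [r_one_zpow, ZMod.intCast_zmod_cast] using
      zpow_mem (subset_closure (by simp) : r 1 ∈ closure {r 1, sr (0 : ZMod n)}) (i.cast : ℤ)
  rcases x with i | i
  · exact hr i
  · simpa [sr_mul_r] using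
      mul_mem (subset_closure (by simp) : sr 0 ∈ closure {r 1, sr (0 : ZMod n)}) (hr i)

lemma exists_conj_eq_r_one_sr_zero (a b : DihedralGroup 3) (ha : a ^ 3 = 1) (ha' : a ≠ 1)
    (hb : b ^ 2 = 1) (hb' : b ≠ 1) : ∃ c, c * r 1 * c⁻¹ = a ∧ c * sr 0 * c⁻¹ = b := by
  revert a b
  decide

lemma mulAut_conj_surjective_three :
    Function.Surjective (MulAut.conj : DihedralGroup 3 →* MulAut (DihedralGroup 3)) := by
  intro σ
  obtain ⟨c, hr, hs⟩ := exists_conj_eq_r_one_sr_zero (σ (r 1)) (σ (sr 0))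
    (by rw [← map_pow, r_one_pow_n, map_one]) (σ.map_ne_one_iff.2 (by decide))
    (by rw [← map_pow, sq, sr_mul_self, map_one]) (σ.map_ne_one_iff.2 (by decide))
  refine ⟨c, MulEquiv.toMonoidHom_injective
    (MonoidHom.eq_of_eqOn_dense (closure_r_one_sr_zero 3) ?_)⟩
  rintro _ (rfl | rfl) <;> simpa

def finSixEquiv : Fin 6 ≃ DihedralGroup 3 where
  toFun := Fin.addCases (motive := fun _ => DihedralGroup 3) (fun i => r i) (fun i => sr (-i))
  invFun
    | r i => Fin.castAdd 3 i
    | sr i => Fin.natAdd 3 (-i)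
  left_inv := by decide
  right_inv := by decide

def finSixMulLeftRight : DihedralGroup 3 × DihedralGroup 3 →* Perm (Fin 6) :=
  (permCongrHom finSixEquiv.symm).toMonoidHom.comp (mulLeftRight _)

lemma finSixMulLeftRight_injective : Function.Injective finSixMulLeftRight :=
  (permCongrHom finSixEquiv.symm).injective.comp
    (mulLeftRight_injective (center_eq_bot_of_odd_ne_one (by decide) (by decide)))

lemma closure_eq_range_finSixMulLeftRight_comp_inl :
    Subgroup.closure
        {(swap 0 1 * swap 1 2) * (swap 3 4 * swap 4 5), swap 0 3 * swap 1 5 * swap 2 4} =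
      (finSixMulLeftRight.comp (MonoidHom.inl _ _)).range := by
  have hu : (swap 0 1 * swap 1 2) * (swap 3 4 * swap 4 5) =
      finSixMulLeftRight.comp (MonoidHom.inl _ _) (r 1) := by decide
  have hv : swap 0 3 * swap 1 5 * swap 2 4 =
      finSixMulLeftRight.comp (MonoidHom.inl _ _) (sr 0) := by decide
  rw [hu, hv, ← Set.image_pair, ← MonoidHom.map_closure, closure_r_one_sr_zero,
    ← MonoidHom.range_eq_map]

def finSixCosetRep : Fin 6 → DihedralGroup 3 := ![1, r 2, r 1, sr 0, sr 1, sr 2]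

lemma finSixCosetRep_bijective : Function.Bijective finSixCosetRep := by decide

lemma finSixMulLeftRight_finSixCosetRep :
    (![1, swap 3 4 * swap 4 5, (swap 3 4 * swap 4 5) ^ 2, swap 1 2 * swap 4 5, swap 1 2 * swap 3 4,
      swap 1 2 * swap 3 5] : Fin 6 → Perm (Fin 6)) =
      fun i => finSixMulLeftRight (finSixCosetRep i, finSixCosetRep i) := by
  decide

end DihedralGroup

open DihedralGroup

/-- The normalizer in `S₆` of the subgroup `⟨u, v⟩` generated by
`u = (1 2 3)(4 5 6)` and `v = (1 4)(2 6)(3 5)` (zero-based: `(0 1 2)(3 4 5)`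
and `(0 3)(1 5)(2 4)`) is isomorphic to `D₃ × D₃`, the quotient of the
normalizer by `⟨u, v⟩` is isomorphic to `D₃` (of order 6; expressed via a
surjective homomorphism with kernel `⟨u,v⟩`), with coset representatives
`id, (4 5 6), (4 6 5), (2 3)(5 6), (2 3)(4 5), (2 3)(4 6)`. -/
theorem stmt15 :
    let u : Equiv.Perm (Fin 6) :=
      (Equiv.swap 0 1 * Equiv.swap 1 2) * (Equiv.swap 3 4 * Equiv.swap 4 5)
    let v : Equiv.Perm (Fin 6) := Equiv.swap 0 3 * Equiv.swap 1 5 * Equiv.swap 2 4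
    let Q := Subgroup.closure {u, v}
    let N := Subgroup.normalizer (Q : Set (Equiv.Perm (Fin 6)))
    let reps : Fin 6 → Equiv.Perm (Fin 6) :=
      ![1, Equiv.swap 3 4 * Equiv.swap 4 5, (Equiv.swap 3 4 * Equiv.swap 4 5) ^ 2,
        Equiv.swap 1 2 * Equiv.swap 4 5, Equiv.swap 1 2 * Equiv.swap 3 4,
        Equiv.swap 1 2 * Equiv.swap 3 5]
    Nonempty (↥N ≃* DihedralGroup 3 × DihedralGroup 3) ∧
    (∃ f : ↥N →* DihedralGroup 3, Function.Surjective f ∧ f.ker = Q.subgroupOf N) ∧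
    (∀ i, reps i ∈ N) ∧
    (∀ x ∈ N, ∃! i : Fin 6, x * (reps i)⁻¹ ∈ Q) := by
  intro u v Q N reps
  have hQ : Q = (finSixMulLeftRight.comp (MonoidHom.inl _ _)).range :=
    closure_eq_range_finSixMulLeftRight_comp_inl
  have hN : N = finSixMulLeftRight.range := by
    simp only [N, hQ]
    exact normalizer_range_comp_inl mulAut_conj_surjective_three _
  have hreps : reps = fun i => finSixMulLeftRight (finSixCosetRep i, finSixCosetRep i) :=
    finSixMulLeftRight_finSixCosetRep
  have hinj := finSixMulLeftRight_injective
  rw [hN, hQ, hreps]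
  exact ⟨⟨(MonoidHom.ofInjective hinj).symm⟩, exists_surjective_ker_eq_range_comp_inl hinj,
    fun i => ⟨_, rfl⟩, existsUnique_mul_inv_mem_range_comp_inl hinj _ finSixCosetRep_bijective⟩
end

section
/- Let p be prime, H = ⟨a_1,...,a_5⟩ ≅ (Z/pZ)^5 with a_6 := (a_1⋯a_5)^{-1}, and let Q* = ⟨u, v⟩ where u permutes (a_1 a_2 a_3)(a_4 a_5 a_6) and v permutes (a_1 a_4)(a_2 a_6)(a_3 a_5). Suppose K = ker(θ) for a surjection θ : H → (Z/pZ)^2 with a_j ∉ K for j = 1,...,6 and K is Q*-invariant. Then either (1) p = 3 or p ≡ 1 mod 3, and K = ⟨a_1a_2a_3, a_1^l a_2^{-1}, a_4^l a_6^{-1}⟩ for some l ∈ {1,...,p-1} with l^2 + l + 1 ≡ 0 mod p; or (2) K = ⟨a_1a_2a_3, a_1^r a_2^s a_4^{-1}, a_1^{-s} a_2^{r-s} a_5^{-1}⟩ for some r, s ∈ {0,...,p-1} with r^2 + s^2 - rs ≡ 1 mod p. -/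
/-!
Write `x j = θ (a j)` in the plane `K × K`. Since `ker θ` is invariant, `u` and `v` descend to
linear maps of the plane permuting the `x j` exactly as they permute the `a j`.

If `x 1 = l • x 0`, then `u` gives `x 2 = l² • x 0` and `v` gives `x 5 = l • x 3`,
`x 4 = l² • x 3`; as `θ` is onto, `x 0` and `x 3` form a basis, and `∑ x j = 0` reads
`(l² + l + 1) • (x 0 + x 3) = 0`. Otherwise `x 0`, `x 1` form a basis; writing
`x 2 = α • x 0 + β • x 1` and `x 3 = r • x 0 + s • x 1`, the relations forced by `u³ = 1` and by
`v` leave only `α = β = -1` and `r² - r s + s² = 1`.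

In both cases the three proposed generators lie in `ker θ` and, together with two vectors
whose images form a basis, span `H`; this pins down `ker θ`. Finally, `l = 1` forces `p = 3`,
and a root `l ≠ 1` of `l² + l + 1` in `ZMod p` has multiplicative order `3`, so `3 ∣ p - 1`.
-/

open Submodule LinearMap Set

theorem ZMod.eq_three_or_mod_three_eq_one {p : ℕ} [Fact p.Prime] {l : ZMod p}
    (hl : l ^ 2 + l + 1 = 0) : p = 3 ∨ p % 3 = 1 := by
  by_cases hl1 : l = 1
  · subst hl1
    have h3 : ((3 : ℕ) : ZMod p) = 0 := by push_cast; linear_combination hl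
    rw [ZMod.natCast_eq_zero_iff, Nat.dvd_prime Nat.prime_three] at h3
    exact .inl (h3.resolve_left (Fact.out : p.Prime).one_lt.ne')
  have hl0 : l ≠ 0 := by rintro rfl; norm_num at hl
  have hord : orderOf l = 3 := orderOf_eq_prime (by linear_combination (l - 1) * hl) hl1
  have hdvd := ZMod.orderOf_dvd_card_sub_one hl0
  rw [hord] at hdvd
  have := (Fact.out : p.Prime).two_le
  omega

theorem AddSubgroup.toZModSubmodule_closure_s16 {n : ℕ} {M : Type*} [AddCommGroup M]
    [Module (ZMod n) M] (s : Set M) :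
    toZModSubmodule n (closure s) = span (ZMod n) s :=
  le_antisymm (fun _ hm => (closure_le (span (ZMod n) s).toAddSubgroup).mpr subset_span hm)
    (span_le.mpr subset_closure)

theorem Submodule.span_singleton_ne_top_prod {K : Type*} [Field K] (y : K × K) :
    K ∙ y ≠ ⊤ := by
  intro h
  have := finrank_span_le_card (R := K) ({y} : Set (K × K))
  rw [h, finrank_top, Module.finrank_prod, Module.finrank_self] at this
  simp at this

theorem LinearIndependent.exists_eq_smul_add_smul {K V : Type*} [DivisionRing K]
    [AddCommGroup V] [Module K V] (hV : Module.finrank K V = 2) {y z : V}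
    (hyz : LinearIndependent K ![y, z]) (w : V) : ∃ a b : K, w = a • y + b • z := by
  have hw : w ∈ span K {y, z} := by
    rw [← Matrix.range_cons_cons_empty y z ![],
      hyz.span_eq_top_of_card_eq_finrank (by simp [hV])]
    exact mem_top
  obtain ⟨a, b, h⟩ := mem_span_pair.1 hw
  exact ⟨a, b, h.symm⟩

theorem LinearMap.exists_comp_eq_comp_of_ker_le_comap {R V W : Type*} [Ring R]
    [AddCommGroup V] [Module R V] [AddCommGroup W] [Module R W] [Module.Projective R W]
    (θ : V →ₗ[R] W) (hθ : Function.Surjective θ) (U : V →ₗ[R] V)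
    (hU : ker θ ≤ (ker θ).comap U) : ∃ f : W →ₗ[R] W, ∀ m, f (θ m) = θ (U m) := by
  obtain ⟨g, hg⟩ := θ.exists_rightInverse_of_surjective (range_eq_top.2 hθ)
  refine ⟨θ ∘ₗ U ∘ₗ g, fun m => ?_⟩
  have hm : g (θ m) - m ∈ ker θ := by
    simp [mem_ker, ← comp_apply θ g, hg]
  simpa [sub_eq_zero] using hU hm

theorem LinearMap.ker_eq_of_forall_eq_add {R M W : Type*} [Ring R] [AddCommGroup M]
    [Module R M] [AddCommGroup W] [Module R W] (θ : M →ₗ[R] W) {N : Submodule R M}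
    {b c : M} (hN : N ≤ ker θ) (hbc : LinearIndependent R ![θ b, θ c])
    (h : ∀ m, ∃ n ∈ N, ∃ s t : R, m = n + s • b + t • c) : ker θ = N := by
  refine le_antisymm (fun m hm => ?_) hN
  obtain ⟨n, hn, s, t, rfl⟩ := h m
  have hst : s • θ b + t • θ c = 0 := by
    simpa [mem_ker.mp (hN hn)] using hm
  obtain ⟨rfl, rfl⟩ := LinearIndependent.pair_iff.mp hbc s t hst
  simpa using hn

theorem eq_neg_one_of_relations {K : Type*} [Field K] {α β r s : K} (hαβ : α * β = 1)
    (hαβ' : α + β ^ 2 = 0) (hrs : r * s * (1 + β) = 0) (hv : s * α = α * r + β * s + r)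
    (hrs0 : r ≠ 0 ∨ s ≠ 0) : β = -1 := by
  by_contra hβ
  have hβ1 : 1 + β ≠ 0 := fun h => hβ (by linear_combination h)
  rcases mul_eq_zero.1 ((mul_eq_zero.1 hrs).resolve_right hβ1) with hr | hs
  · have hs : s ≠ 0 := hrs0.resolve_left (not_not.2 hr)
    have hsαβ : s * (α - β) = 0 := by linear_combination hv + (α + 1) * hr
    have hαβ'' : α = β := by linear_combination (mul_eq_zero.1 hsαβ).resolve_left hs
    have hβ0 : β * (1 + β) = 0 := by linear_combination hαβ' - hαβ''
    exact one_ne_zero (by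
      linear_combination -hαβ + α * (mul_eq_zero.1 hβ0).resolve_right hβ1 : (1 : K) = 0)
  · have hr : r ≠ 0 := hrs0.resolve_right (not_not.2 hs)
    have hrα : r * (α + 1) = 0 := by linear_combination -hv + (α - β) * hs
    exact hβ (by linear_combination -hαβ + β * (mul_eq_zero.1 hrα).resolve_left hr)

-- `x j` stands for `θ (a j)`; `u` and `v` act on these images through linear maps of the plane.
structure IsQStarConfig {K : Type*} [Field K] (x : Fin 6 → K × K) : Prop where
  equivariant_u : ∃ f : K × K →ₗ[K] K × K, f (x 0) = x 1 ∧ f (x 1) = x 2 ∧ f (x 2) = x 0 ∧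
    f (x 3) = x 4 ∧ f (x 4) = x 5 ∧ f (x 5) = x 3
  equivariant_v : ∃ f : K × K →ₗ[K] K × K, f (x 0) = x 3 ∧ f (x 3) = x 0 ∧ f (x 1) = x 5 ∧
    f (x 5) = x 1 ∧ f (x 2) = x 4 ∧ f (x 4) = x 2
  sum_eq_zero : x 0 + x 1 + x 2 + x 3 + x 4 + x 5 = 0
  span_eq_top : span K (range x) = ⊤
  ne_zero : ∀ i, x i ≠ 0

namespace IsQStarConfig

variable {K : Type*} [Field K] {x : Fin 6 → K × K}

theorem of_eq_smul (hx : IsQStarConfig x) {l : K} (hl : x 1 = l • x 0) :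
    l ^ 2 + l + 1 = 0 ∧ x 5 = l • x 3 ∧ x 0 + x 1 + x 2 = 0 ∧
      LinearIndependent K ![x 0, x 3] := by
  obtain ⟨f, hf0, hf1, -⟩ := hx.equivariant_u
  obtain ⟨g, hg0, -, hg1, -, hg2, -⟩ := hx.equivariant_v
  have h2 : x 2 = (l * l) • x 0 := by rw [← hf1, hl, map_smul, hf0, hl, smul_smul]
  have h5 : x 5 = l • x 3 := by rw [← hg1, hl, map_smul, hg0]
  have h4 : x 4 = (l * l) • x 3 := by rw [← hg2, h2, map_smul, hg0]
  have hind : LinearIndependent K ![x 0, x 3] := by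
    refine (LinearIndependent.pair_iff' (hx.ne_zero 0)).2 fun t ht => ?_
    refine span_singleton_ne_top_prod (x 0) (eq_top_iff.2 ?_)
    have h0 := mem_span_singleton_self (R := K) (x 0)
    have h3 : x 3 ∈ K ∙ x 0 := ht ▸ smul_mem _ t h0
    rw [← hx.span_eq_top, span_le, range_subset_iff]
    intro i
    fin_cases i
    exacts [h0, hl ▸ smul_mem _ l h0, h2 ▸ smul_mem _ _ h0, h3, h4 ▸ smul_mem _ _ h3,
      h5 ▸ smul_mem _ _ h3]
  have hsum : (l ^ 2 + l + 1) • x 0 + (l ^ 2 + l + 1) • x 3 = 0 := by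
    linear_combination (norm := module) hx.sum_eq_zero - hl - h2 - h4 - h5
  have hl3 : l ^ 2 + l + 1 = 0 := (LinearIndependent.pair_iff.1 hind _ _ hsum).1
  refine ⟨hl3, h5, ?_, hind⟩
  linear_combination (norm := module) hl + h2 + hl3 • x 0

theorem of_linearIndependent (hx : IsQStarConfig x) (hind : LinearIndependent K ![x 0, x 1]) :
    ∃ r s : K, r ^ 2 + s ^ 2 - r * s = 1 ∧ x 0 + x 1 + x 2 = 0 ∧
      x 3 = r • x 0 + s • x 1 ∧ x 4 = (-s) • x 0 + (r - s) • x 1 := by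
  have hrep := hind.exists_eq_smul_add_smul (by simp)
  have coeff {c d : K} (h : c • x 0 + d • x 1 = 0) := LinearIndependent.pair_iff.1 hind c d h
  obtain ⟨f, hf0, hf1, hf2, hf3, hf4, -⟩ := hx.equivariant_u
  obtain ⟨g, hg0, hg3, hg1, -, hg2, -⟩ := hx.equivariant_v
  obtain ⟨α, β, h2⟩ := hrep (x 2)
  obtain ⟨r, s, h3⟩ := hrep (x 3)
  have h4 : x 4 = r • x 1 + s • x 2 := by rw [← hf3, h3, map_add, map_smul, map_smul, hf0, hf1]
  have h5 : x 5 = r • x 2 + s • x 0 := by rw [← hf4, h4, map_add, map_smul, map_smul, hf1, hf2]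
  have hu2 : x 0 = α • x 1 + β • x 2 := by
    conv_lhs => rw [← hf2, h2, map_add, map_smul, map_smul, hf0, hf1]
  have hv3 : x 0 = r • x 3 + s • x 5 := by
    conv_lhs => rw [← hg3, h3, map_add, map_smul, map_smul, hg0, hg1]
  have hv2 : x 4 = α • x 3 + β • x 5 := by rw [← hg2, h2, map_add, map_smul, map_smul, hg0, hg1]
  obtain ⟨hαβ, hαβ'⟩ := coeff (c := α * β - 1) (d := α + β ^ 2)
    (by linear_combination (norm := module) -hu2 - β • h2)
  obtain ⟨hrs, hrs'⟩ := coeff (c := r ^ 2 + s ^ 2 + α * r * s - 1) (d := r * s * (1 + β))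
    (by linear_combination (norm := module) -hv3 - r • h3 - s • h5 - (s * r) • h2)
  obtain ⟨hv, -⟩ := coeff (c := s * α - α * r - β * s - α * β * r)
    (d := r - α * s + s * β - β ^ 2 * r)
    (by linear_combination (norm := module) hv2 - h4 + α • h3 + β • h5 - (s - β * r) • h2)
  have hrs0 : r ≠ 0 ∨ s ≠ 0 := by
    by_contra! h
    exact hx.ne_zero 3 (by simp [h3, h.1, h.2])
  have hβ : β = -1 := eq_neg_one_of_relations (by linear_combination hαβ) hαβ' hrs'
    (by linear_combination hv + r * hαβ) hrs0
  have hα : α = -1 := by linear_combination -hαβ + α * hβ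
  refine ⟨r, s, by linear_combination hrs - r * s * hα, ?_, h3, ?_⟩
  · rw [h2, hα, hβ]; module
  · rw [h4, h2, hα, hβ]; module

theorem cases (hx : IsQStarConfig x) :
    (∃ l : K, l ^ 2 + l + 1 = 0 ∧ x 1 = l • x 0 ∧ x 5 = l • x 3 ∧ x 0 + x 1 + x 2 = 0 ∧
      LinearIndependent K ![x 0, x 3]) ∨
    (∃ r s : K, r ^ 2 + s ^ 2 - r * s = 1 ∧ x 0 + x 1 + x 2 = 0 ∧
      x 3 = r • x 0 + s • x 1 ∧ x 4 = (-s) • x 0 + (r - s) • x 1 ∧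
      LinearIndependent K ![x 0, x 1]) := by
  by_cases hind : LinearIndependent K ![x 0, x 1]
  · obtain ⟨r, s, h⟩ := hx.of_linearIndependent hind
    exact .inr ⟨r, s, h.1, h.2.1, h.2.2.1, h.2.2.2, hind⟩
  · obtain ⟨l, hl⟩ : ∃ l : K, l • x 0 = x 1 := by
      simpa [LinearIndependent.pair_iff' (hx.ne_zero 0)] using hind
    exact .inl ⟨l, (hx.of_eq_smul hl.symm).1, hl.symm, (hx.of_eq_smul hl.symm).2⟩

end IsQStarConfig

section StandardGenerators

variable {K W : Type*} [Field K] [AddCommGroup W] [Module K W] {a : Fin 6 → Fin 5 → K}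

theorem eq_sum_smul_of_castSucc (ha : ∀ j : Fin 5, a j.castSucc = Pi.single j 1)
    (m : Fin 5 → K) : m = m 0 • a 0 + m 1 • a 1 + m 2 • a 2 + m 3 • a 3 + m 4 • a 4 := by
  funext k
  fin_cases k <;> simp [show a 0 = Pi.single 0 1 from ha 0, show a 1 = Pi.single 1 1 from ha 1,
    show a 2 = Pi.single 2 1 from ha 2, show a 3 = Pi.single 3 1 from ha 3,
    show a 4 = Pi.single 4 1 from ha 4]

theorem sum_eq_zero_of_castSucc (ha : ∀ j : Fin 5, a j.castSucc = Pi.single j 1)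
    (hlast : a 5 = -∑ j : Fin 5, Pi.single j 1) : a 0 + a 1 + a 2 + a 3 + a 4 + a 5 = 0 := by
  simp only [hlast, Fin.sum_univ_five, ← ha]
  simp

theorem span_range_eq_top_of_castSucc (ha : ∀ j : Fin 5, a j.castSucc = Pi.single j 1) :
    span K (range a) = ⊤ :=
  eq_top_iff.2 <| (Pi.basisFun K (Fin 5)).span_eq.ge.trans <|
    span_mono <| range_subset_iff.2 fun j => ⟨j.castSucc, by simp [ha]⟩

theorem ker_eq_span_of_eq_smul (θ : (Fin 5 → K) →ₗ[K] W)
    (ha : ∀ j : Fin 5, a j.castSucc = Pi.single j 1)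
    (hlast : a 5 = -∑ j : Fin 5, Pi.single j 1) {l : K} (h1 : θ (a 1) = l • θ (a 0))
    (h5 : θ (a 5) = l • θ (a 3)) (h012 : θ (a 0) + θ (a 1) + θ (a 2) = 0)
    (hind : LinearIndependent K ![θ (a 0), θ (a 3)]) :
    ker θ = span K {a 0 + a 1 + a 2, l • a 0 - a 1, l • a 3 - a 5} := by
  refine θ.ker_eq_of_forall_eq_add (span_le.2 ?_) hind fun m => ?_
  · simp [insert_subset_iff, h012, ← h1, h5]
  refine ⟨(m 2 - m 4) • (a 0 + a 1 + a 2) + (m 2 - m 1) • (l • a 0 - a 1) + m 4 • (l • a 3 - a 5),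
    mem_span_triple.2 ⟨_, _, _, rfl⟩, m 0 - m 2 - l * (m 2 - m 1), m 3 - (l + 1) * m 4, ?_⟩
  linear_combination (norm := module)
    eq_sum_smul_of_castSucc ha m + m 4 • sum_eq_zero_of_castSucc ha hlast

theorem ker_eq_span_of_linearIndependent (θ : (Fin 5 → K) →ₗ[K] W)
    (ha : ∀ j : Fin 5, a j.castSucc = Pi.single j 1) {r s : K}
    (h012 : θ (a 0) + θ (a 1) + θ (a 2) = 0) (h3 : θ (a 3) = r • θ (a 0) + s • θ (a 1))
    (h4 : θ (a 4) = (-s) • θ (a 0) + (r - s) • θ (a 1))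
    (hind : LinearIndependent K ![θ (a 0), θ (a 1)]) :
    ker θ =
      span K {a 0 + a 1 + a 2, r • a 0 + s • a 1 - a 3, (-s) • a 0 + (r - s) • a 1 - a 4} := by
  refine θ.ker_eq_of_forall_eq_add (span_le.2 ?_) hind fun m => ?_
  · simp [insert_subset_iff, h012, h3, h4]
  refine ⟨m 2 • (a 0 + a 1 + a 2) + (-m 3) • (r • a 0 + s • a 1 - a 3)
      + (-m 4) • ((-s) • a 0 + (r - s) • a 1 - a 4), mem_span_triple.2 ⟨_, _, _, rfl⟩,
    m 0 - m 2 + r * m 3 - s * m 4, m 1 - m 2 + s * m 3 + (r - s) * m 4, ?_⟩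
  linear_combination (norm := module) eq_sum_smul_of_castSucc ha m

end StandardGenerators

/-- Let `p` be prime, `H = ⟨a_1,…,a_5⟩ ≅ (ℤ/pℤ)⁵` with `a_6 := -(a_1+⋯+a_5)`,
and let `U, V` be the automorphisms of `H` given by the permutations
`u = (a_1 a_2 a_3)(a_4 a_5 a_6)` and `v = (a_1 a_4)(a_2 a_6)(a_3 a_5)`,
generating `Q*`.  Suppose `K = ker θ` for a surjection `θ : H → (ℤ/pℤ)²` with
`a_j ∉ K` for `j = 1,…,6` and `K` invariant under `Q*`.  Then either
(1) `p = 3` or `p ≡ 1 (mod 3)` and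
`K = ⟨a_1a_2a_3, a_1^l a_2^{-1}, a_4^l a_6^{-1}⟩` for some `l` with
`l² + l + 1 ≡ 0 (mod p)`; or
(2) `K = ⟨a_1a_2a_3, a_1^r a_2^s a_4^{-1}, a_1^{-s} a_2^{r-s} a_5^{-1}⟩` for
some `r, s` with `r² + s² - rs ≡ 1 (mod p)`. -/
theorem stmt16 (p : ℕ) [Fact p.Prime]
    (a : Fin 6 → (Fin 5 → ZMod p))
    (ha : ∀ j : Fin 5, a j.castSucc = Pi.single j 1)
    (hlast : a 5 = -∑ j : Fin 5, Pi.single j 1)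
    (U V : (Fin 5 → ZMod p) ≃+ (Fin 5 → ZMod p))
    (hU0 : U (a 0) = a 1) (hU1 : U (a 1) = a 2) (hU2 : U (a 2) = a 0)
    (hU3 : U (a 3) = a 4) (hU4 : U (a 4) = a 5) (hU5 : U (a 5) = a 3)
    (hV0 : V (a 0) = a 3) (hV3 : V (a 3) = a 0)
    (hV1 : V (a 1) = a 5) (hV5 : V (a 5) = a 1)
    (hV2 : V (a 2) = a 4) (hV4 : V (a 4) = a 2)
    (θ : (Fin 5 → ZMod p) →+ (ZMod p × ZMod p))
    (hsurj : Function.Surjective θ)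
    (hnotin : ∀ j, a j ∉ θ.ker)
    (hinvU : AddSubgroup.map U.toAddMonoidHom θ.ker = θ.ker)
    (hinvV : AddSubgroup.map V.toAddMonoidHom θ.ker = θ.ker) :
    ((p = 3 ∨ p % 3 = 1) ∧ ∃ l : ZMod p, l ≠ 0 ∧ l ^ 2 + l + 1 = 0 ∧
      θ.ker = AddSubgroup.closure
        {a 0 + a 1 + a 2, l • a 0 - a 1, l • a 3 - a 5}) ∨
    (∃ r s : ZMod p, r ^ 2 + s ^ 2 - r * s = 1 ∧
      θ.ker = AddSubgroup.closure
        {a 0 + a 1 + a 2, r • a 0 + s • a 1 - a 3, (-s) • a 0 + (r - s) • a 1 - a 4}) := by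
  have hker : ∀ S, ker (θ.toZModLinearMap p) = span (ZMod p) S →
      θ.ker = AddSubgroup.closure S :=
    fun S h => (AddSubgroup.toZModSubmodule p).injective <| by
      rw [AddSubgroup.toZModSubmodule_closure_s16, ← h]; rfl
  obtain ⟨f, hf⟩ := (θ.toZModLinearMap p).exists_comp_eq_comp_of_ker_le_comap hsurj
    (U.toAddMonoidHom.toZModLinearMap p) fun m hm => hinvU.le ⟨m, hm, rfl⟩
  obtain ⟨g, hg⟩ := (θ.toZModLinearMap p).exists_comp_eq_comp_of_ker_le_comap hsurj
    (V.toAddMonoidHom.toZModLinearMap p) fun m hm => hinvV.le ⟨m, hm, rfl⟩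
  have hx : IsQStarConfig fun j => θ (a j) := by
    refine ⟨⟨f, ?_⟩, ⟨g, ?_⟩, ?_, ?_, hnotin⟩
    · simp only [show ∀ m, f (θ m) = θ (U m) from hf, hU0, hU1, hU2, hU3, hU4, hU5, and_self]
    · simp only [show ∀ m, g (θ m) = θ (V m) from hg, hV0, hV1, hV2, hV3, hV4, hV5, and_self]
    · simpa only [map_add, map_zero] using congrArg θ (sum_eq_zero_of_castSucc ha hlast)
    · change span _ (range (θ.toZModLinearMap p ∘ a)) = ⊤
      rw [range_comp, span_image, span_range_eq_top_of_castSucc ha, Submodule.map_top,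
        range_eq_top.2 hsurj]
  rcases hx.cases with ⟨l, hl, h1, h5, h012, hind⟩ | ⟨r, s, hrs, h012, h3, h4, hind⟩
  · refine .inl ⟨ZMod.eq_three_or_mod_three_eq_one hl, l, by rintro rfl; norm_num at hl, hl, ?_⟩
    exact hker _ (ker_eq_span_of_eq_smul _ ha hlast h1 h5 h012 hind)
  · exact .inr ⟨r, s, hrs, hker _ (ker_eq_span_of_linearIndependent _ ha h012 h3 h4 hind)⟩
end

section
/- Let p ≥ 2 be prime, H = ⟨a_1,...,a_5⟩ ≅ (Z/pZ)^5 with a_6 := (a_1⋯a_5)^{-1}, and let Q* = ⟨u, v⟩ ≤ Sym{a_1,...,a_6} with u = (a_3 a_5)(a_4 a_6) and v = (a_1 a_2)(a_3 a_4)(a_5 a_6), acting on H. For p ≥ 3, suppose K = ker(θ) where θ : H → (Z/pZ)^2 is surjective, a_j ∉ K for all j = 1,...,6, and K is Q*-invariant, and suppose moreover θ(a_2) ∉ ⟨θ(a_1)⟩. Then there exist r, s ∈ {0,...,p-1} with r + s ∈ {(p-1)/2, (3p-1)/2} such that θ = (φ_1, φ_2, φ_1^r φ_2^s, φ_1^s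 φ_2^r, φ_1^r φ_2^s, φ_1^s φ_2^r) on (a_1,...,a_6), where φ_1 = θ(a_1), φ_2 = θ(a_2); equivalently K = ⟨a_1^r a_2^s a_3^{-1}, a_3 a_5^{-1}, a_4 a_6^{-1}⟩. -/
/-!
`θ (a 0)` is nonzero and `θ (a 1)` is not a multiple of it, so the two form a basis of
`(ZMod p)²` and `θ (a 2) = r • θ (a 0) + s • θ (a 1)` for some `r, s`. An automorphism `σ`
preserving `ker θ` satisfies `θ x = θ y → θ (σ x) = θ (σ y)`; applying `u` and `v` to the
relation `θ (a 2) = θ (r • a 0 + s • a 1)` determines `θ` on `a 3, a 4, a 5`. The relation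
`a 0 + ⋯ + a 5 = 0` then reads `(2 (r + s) + 1) • (θ (a 0) + θ (a 1)) = 0`, i.e.
`2 (r + s) = -1`, and the kernel is read off in coordinates.
-/

theorem exists_smul_add_smul_eq_of_linearIndependent_pair {K V : Type*} [DivisionRing K]
    [AddCommGroup V] [Module K V] [FiniteDimensional K V] (hV : Module.finrank K V = 2)
    {x y : V} (h : LinearIndependent K ![x, y]) (z : V) : ∃ a b : K, a • x + b • y = z := by
  have hspan := h.span_eq_top_of_card_eq_finrank (by simp [hV])
  rw [Matrix.range_cons_cons_empty] at hspan
  exact Submodule.mem_span_pair.mp (hspan ▸ Submodule.mem_top)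

theorem ZMod.linearIndependent_pair_of_notMem_zmultiples {p : ℕ} [Fact p.Prime] {M : Type*}
    [AddCommGroup M] [Module (ZMod p) M] {x y : M} (hx : x ≠ 0)
    (hy : y ∉ AddSubgroup.zmultiples x) : LinearIndependent (ZMod p) ![x, y] :=
  (LinearIndependent.pair_iff' hx).mpr fun c hxy =>
    hy (hxy ▸ ZMod.smul_mem (AddSubgroup.mem_zmultiples x) c)

theorem AddMonoidHom.apply_eq_apply_of_map_ker_le {G H : Type*} [AddGroup G] [AddGroup H]
    (θ : G →+ H) (σ : G →+ G) (hσ : θ.ker.map σ ≤ θ.ker) {x y : G} (h : θ x = θ y) :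
    θ (σ x) = θ (σ y) := by
  have hxy : x - y ∈ θ.ker := by simp [h]
  simpa [sub_eq_zero] using hσ (AddSubgroup.mem_map_of_mem σ hxy)

theorem ZMod.val_add_val_eq_of_two_mul_add_eq_neg_one {p : ℕ} [NeZero p] {r s : ZMod p}
    (h : 2 * (r + s) = -1) :
    r.val + s.val = (p - 1) / 2 ∨ r.val + s.val = (3 * p - 1) / 2 := by
  have hdvd : p ∣ 1 + 2 * r.val + 2 * s.val := by
    rw [← ZMod.natCast_eq_zero_iff]
    push_cast [ZMod.natCast_zmod_val]
    linear_combination h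
  obtain ⟨k, hk⟩ := hdvd
  have hr := r.val_lt
  have hs := s.val_lt
  have hk4 : k < 4 := by
    by_contra! hk4
    nlinarith
  interval_cases k <;> omega

section
variable {p : ℕ} {a : Fin 6 → Fin 5 → ZMod p}

theorem eq_sum_smul_of_basis (ha : ∀ j : Fin 5, a j.castSucc = Pi.single j 1)
    (x : Fin 5 → ZMod p) :
    x = x 0 • a 0 + x 1 • a 1 + x 2 • a 2 + x 3 • a 3 + x 4 • a 4 := by
  obtain ⟨e0, e1, e2, e3, e4⟩ : a 0 = Pi.single 0 1 ∧ a 1 = Pi.single 1 1 ∧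
      a 2 = Pi.single 2 1 ∧ a 3 = Pi.single 3 1 ∧ a 4 = Pi.single 4 1 :=
    ⟨ha 0, ha 1, ha 2, ha 3, ha 4⟩
  rw [e0, e1, e2, e3, e4]
  ext i
  fin_cases i <;> simp

theorem last_eq_neg_sum (ha : ∀ j : Fin 5, a j.castSucc = Pi.single j 1)
    (hlast : a 5 = -∑ j : Fin 5, Pi.single j 1) :
    a 5 = -(a 0 + a 1 + a 2 + a 3 + a 4) := by
  rw [hlast, show ∑ j : Fin 5, Pi.single j (1 : ZMod p) = 1 from Finset.univ_sum_single 1,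
    eq_sum_smul_of_basis ha 1]
  simp

variable {M : Type*} [AddCommGroup M] [Module (ZMod p) M] (θ : (Fin 5 → ZMod p) →+ M)
  {r s : ZMod p}

theorem two_mul_add_eq_neg_one_of_apply_eq (ha : ∀ j : Fin 5, a j.castSucc = Pi.single j 1)
    (hlast : a 5 = -∑ j : Fin 5, Pi.single j 1)
    (hind : LinearIndependent (ZMod p) ![θ (a 0), θ (a 1)])
    (h2 : θ (a 2) = r • θ (a 0) + s • θ (a 1)) (h3 : θ (a 3) = s • θ (a 0) + r • θ (a 1))
    (h4 : θ (a 4) = θ (a 2)) (h5 : θ (a 5) = θ (a 3)) :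
    2 * (r + s) = -1 := by
  have hsum := congrArg θ (last_eq_neg_sum ha hlast)
  simp only [map_neg, map_add, h2, h3, h4, h5] at hsum
  have hzero : (2 * (r + s) + 1) • θ (a 0) + (2 * (r + s) + 1) • θ (a 1) = 0 := by
    linear_combination (norm := module) hsum
  exact eq_neg_of_add_eq_zero_left (LinearIndependent.pair_iff.mp hind _ _ hzero).1

theorem ker_eq_closure_of_apply_eq (ha : ∀ j : Fin 5, a j.castSucc = Pi.single j 1)
    (hlast : a 5 = -∑ j : Fin 5, Pi.single j 1)
    (hind : LinearIndependent (ZMod p) ![θ (a 0), θ (a 1)]) (hrs : 2 * (r + s) = -1)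
    (h2 : θ (a 2) = r • θ (a 0) + s • θ (a 1)) (h3 : θ (a 3) = s • θ (a 0) + r • θ (a 1))
    (h4 : θ (a 4) = θ (a 2)) (h5 : θ (a 5) = θ (a 3)) :
    θ.ker = AddSubgroup.closure {r • a 0 + s • a 1 - a 2, a 2 - a 4, a 3 - a 5} := by
  apply le_antisymm
  · intro x hx
    have hx0 : θ x = 0 := hx
    have hxa := eq_sum_smul_of_basis ha x
    have hcoef : (x 0 + r * x 2 + s * x 3 + r * x 4) • θ (a 0)
        + (x 1 + s * x 2 + r * x 3 + s * x 4) • θ (a 1) = 0 := by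
      rw [← hx0]
      conv_rhs => rw [hxa]
      simp only [map_add, ZMod.map_smul, h2, h3, h4]
      module
    obtain ⟨hc, hd⟩ := LinearIndependent.pair_iff.mp hind _ _ hcoef
    -- `-(r + s)` plays the role of `1 / 2`, by `hrs`
    have hx' : x = (x 3 - x 2 - x 4) • (r • a 0 + s • a 1 - a 2)
        + (-(r + s) * x 3 - x 4) • (a 2 - a 4) + (-(r + s) * x 3) • (a 3 - a 5) := by
      linear_combination (norm := module) hxa + hc • a 0 + hd • a 1
        + (x 3 * hrs) • (a 2 + a 3) - ((r + s) * x 3) • last_eq_neg_sum ha hlast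
    rw [hx']
    refine add_mem (add_mem ?_ ?_) ?_ <;>
      exact ZMod.smul_mem (AddSubgroup.subset_closure (by simp)) _
  · rw [AddSubgroup.closure_le]
    rintro g (rfl | rfl | rfl) <;> simp [ZMod.map_smul, h2, h4, h5]
end

theorem stmt18_general (p : ℕ) [Fact p.Prime]
    (a : Fin 6 → (Fin 5 → ZMod p))
    (ha : ∀ j : Fin 5, a j.castSucc = Pi.single j 1)
    (hlast : a 5 = -∑ j : Fin 5, Pi.single j 1)
    (U V : (Fin 5 → ZMod p) ≃+ (Fin 5 → ZMod p))
    (hU0 : U (a 0) = a 0) (hU1 : U (a 1) = a 1)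
    (hU2 : U (a 2) = a 4)
    (hV0 : V (a 0) = a 1) (hV1 : V (a 1) = a 0)
    (hV2 : V (a 2) = a 3) (hV4 : V (a 4) = a 5)
    (θ : (Fin 5 → ZMod p) →+ (ZMod p × ZMod p))
    (hnotin : ∀ j, a j ∉ θ.ker)
    (hinvU : AddSubgroup.map U.toAddMonoidHom θ.ker = θ.ker)
    (hinvV : AddSubgroup.map V.toAddMonoidHom θ.ker = θ.ker)
    (hnot : θ (a 1) ∉ AddSubgroup.zmultiples (θ (a 0))) :
    ∃ r s : ℕ, r < p ∧ s < p ∧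
      (r + s = (p - 1) / 2 ∨ r + s = (3 * p - 1) / 2) ∧
      (θ (a 2) = r • θ (a 0) + s • θ (a 1) ∧
       θ (a 3) = s • θ (a 0) + r • θ (a 1) ∧
       θ (a 4) = r • θ (a 0) + s • θ (a 1) ∧
       θ (a 5) = s • θ (a 0) + r • θ (a 1)) ∧
      θ.ker = AddSubgroup.closure
        {((r : ZMod p)) • a 0 + ((s : ZMod p)) • a 1 - a 2, a 2 - a 4, a 3 - a 5} := by
  have hind := ZMod.linearIndependent_pair_of_notMem_zmultiples (p := p) (hnotin 0) hnot
  obtain ⟨r, s, h2⟩ := exists_smul_add_smul_eq_of_linearIndependent_pair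
    (by rw [Module.finrank_prod, Module.finrank_self]) hind (θ (a 2))
  replace h2 := h2.symm
  have hcomb : θ (a 2) = θ (r • a 0 + s • a 1) := by simp [ZMod.map_smul, h2]
  have h4 : θ (a 4) = θ (a 2) := by
    simpa [hU0, hU1, hU2, ZMod.map_smul, ← hcomb] using
      θ.apply_eq_apply_of_map_ker_le U.toAddMonoidHom hinvU.le hcomb
  have h3 : θ (a 3) = s • θ (a 0) + r • θ (a 1) := by
    simpa [hV0, hV1, hV2, ZMod.map_smul, add_comm] using
      θ.apply_eq_apply_of_map_ker_le V.toAddMonoidHom hinvV.le hcomb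
  have h5 : θ (a 5) = θ (a 3) := by
    simpa [hV2, hV4] using θ.apply_eq_apply_of_map_ker_le V.toAddMonoidHom hinvV.le h4
  have hrs := two_mul_add_eq_neg_one_of_apply_eq θ ha hlast hind h2 h3 h4 h5
  refine ⟨r.val, s.val, r.val_lt, s.val_lt, ZMod.val_add_val_eq_of_two_mul_add_eq_neg_one hrs,
    ?_, ?_⟩
  · simp only [← Nat.cast_smul_eq_nsmul (ZMod p), ZMod.natCast_zmod_val]
    exact ⟨h2, h3, h4.trans h2, h5.trans h3⟩
  · simpa only [ZMod.natCast_zmod_val] using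
      ker_eq_closure_of_apply_eq θ ha hlast hind hrs h2 h3 h4 h5

/-- Let `p ≥ 3` be prime, `H = ⟨a_1,…,a_5⟩ ≅ (ℤ/pℤ)⁵` with
`a_6 := -(a_1+⋯+a_5)`, and let `U, V` be the automorphisms of `H` given by the
permutations `u = (a_3 a_5)(a_4 a_6)` and `v = (a_1 a_2)(a_3 a_4)(a_5 a_6)`,
generating `Q* ≅ ℤ₂ × ℤ₂`.  Suppose `K = ker θ` for a surjection
`θ : H → (ℤ/pℤ)²`, with `a_j ∉ K` for all `j`, `K` invariant under `Q*`, and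
`θ(a_2) ∉ ⟨θ(a_1)⟩`.  Then there are `r, s ∈ {0,…,p-1}` with
`r + s ∈ {(p-1)/2, (3p-1)/2}` such that, writing `φ₁ = θ(a_1)`,
`φ₂ = θ(a_2)`, one has
`θ = (φ₁, φ₂, φ₁^r φ₂^s, φ₁^s φ₂^r, φ₁^r φ₂^s, φ₁^s φ₂^r)` on `(a_1,…,a_6)`;
equivalently `K = ⟨a_1^r a_2^s a_3^{-1}, a_3 a_5^{-1}, a_4 a_6^{-1}⟩`. -/
theorem stmt18 (p : ℕ) [Fact p.Prime] (hp : 3 ≤ p)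
    (a : Fin 6 → (Fin 5 → ZMod p))
    (ha : ∀ j : Fin 5, a j.castSucc = Pi.single j 1)
    (hlast : a 5 = -∑ j : Fin 5, Pi.single j 1)
    (U V : (Fin 5 → ZMod p) ≃+ (Fin 5 → ZMod p))
    (hU0 : U (a 0) = a 0) (hU1 : U (a 1) = a 1)
    (hU2 : U (a 2) = a 4) (hU4 : U (a 4) = a 2)
    (hU3 : U (a 3) = a 5) (hU5 : U (a 5) = a 3)
    (hV0 : V (a 0) = a 1) (hV1 : V (a 1) = a 0)
    (hV2 : V (a 2) = a 3) (hV3 : V (a 3) = a 2)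
    (hV4 : V (a 4) = a 5) (hV5 : V (a 5) = a 4)
    (θ : (Fin 5 → ZMod p) →+ (ZMod p × ZMod p))
    (hsurj : Function.Surjective θ)
    (hnotin : ∀ j, a j ∉ θ.ker)
    (hinvU : AddSubgroup.map U.toAddMonoidHom θ.ker = θ.ker)
    (hinvV : AddSubgroup.map V.toAddMonoidHom θ.ker = θ.ker)
    (hnot : θ (a 1) ∉ AddSubgroup.zmultiples (θ (a 0))) :
    ∃ r s : ℕ, r < p ∧ s < p ∧
      (r + s = (p - 1) / 2 ∨ r + s = (3 * p - 1) / 2) ∧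
      (θ (a 2) = r • θ (a 0) + s • θ (a 1) ∧
       θ (a 3) = s • θ (a 0) + r • θ (a 1) ∧
       θ (a 4) = r • θ (a 0) + s • θ (a 1) ∧
       θ (a 5) = s • θ (a 0) + r • θ (a 1)) ∧
      θ.ker = AddSubgroup.closure
        {((r : ZMod p)) • a 0 + ((s : ZMod p)) • a 1 - a 2, a 2 - a 4, a 3 - a 5} :=
  stmt18_general p a ha hlast U V hU0 hU1 hU2 hV0 hV1 hV2 hV4 θ hnotin hinvU hinvV hnot
end
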